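/- arXiv:1307.3816 — 7 statements merged into one kernel-verified Lean document; each statement's English description precedes it below -/
import Mathlib

section
/- If a, b are Drazin invertible in a ring with a³b = ba and b³a = ab, then (a^D)³·b = b·a^D and (b^D)³·a = a·b^D. -/
/-- `x` is a Drazin inverse of `a`. -/
def IsDrazinInverse {R : Type*} [Ring R] (a x : R) : Prop :=
  x * a * x = x ∧ a * x = x * a ∧ ∃ k : ℕ, a ^ (k + 1) * x = a ^ k

lemma drazin_key {R : Type*} [Ring R] (a aD b : R)
    (haD : IsDrazinInverse a aD) (h1 : a ^ 3 * b = b * a) :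
    aD ^ 3 * b = b * aD := by
  obtain ⟨hx, hc, k, hk⟩ := haD
  have hca : Commute a aD := hc
  have hx2 : a * aD * aD = aD := by rw [hc]; exact hx
  have hx3 : aD * aD * a = aD := by
    rw [mul_assoc, ← hc, ← mul_assoc]; exact hx
  -- a ^ (k + m + 1) * aD = a ^ (k + m)
  have hp : ∀ m, a ^ (k + m + 1) * aD = a ^ (k + m) := by
    intro m
    rw [show k + m + 1 = m + (k + 1) by omega, pow_add, mul_assoc, hk,
      ← pow_add, Nat.add_comm m k]
  -- a ^ (3m) * b = b * a ^ m
  have h3 : ∀ m, a ^ (3 * m) * b = b * a ^ m := by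
    intro m
    induction m with
    | zero => simp
    | succ m ih =>
        rw [show 3 * (m + 1) = 3 * m + 3 by omega, pow_add, mul_assoc, h1,
          ← mul_assoc, ih, mul_assoc, ← pow_succ]
  -- aD ^ (m+1) * a ^ m = aD
  have h4a : ∀ m, aD ^ (m + 1) * a ^ m = aD := by
    intro m
    induction m with
    | zero => simp
    | succ m ih =>
        have e : aD ^ (m + 1 + 1) * a ^ (m + 1) = aD ^ m * (aD * aD * a) * a ^ m := by
          rw [pow_succ aD (m + 1), pow_succ aD m, pow_succ' a m]
          simp only [mul_assoc]
        rw [e, hx3, ← pow_succ, ih]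
  -- a ^ m * aD ^ (m+1) = aD
  have h4b : ∀ m, a ^ m * aD ^ (m + 1) = aD := by
    intro m
    induction m with
    | zero => simp
    | succ m ih =>
        have e : a ^ (m + 1) * aD ^ (m + 1 + 1) = a ^ m * (a * aD * aD) * aD ^ m := by
          rw [pow_succ a m, pow_succ' aD (m + 1), pow_succ' aD m]
          simp only [mul_assoc]
        rw [e, hx2, mul_assoc, ← pow_succ', ih]
  set n := k + 1 with hn
  have hidem : (aD * a) * (aD * a) = aD * a := by
    rw [← mul_assoc, hx]
  -- aD^3 * a^3 = aD * a
  have hS3 : aD ^ 3 * a ^ 3 = aD * a := by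
    rw [← hca.symm.mul_pow 3, pow_succ, pow_two, hidem, hidem]
  -- S1
  have hS1 : a * aD * (b * a ^ n) = b * a ^ n := by
    have h5 := hp (2 * k + 3)
    rw [show k + (2 * k + 3) + 1 = 3 * n + 1 by omega,
      show k + (2 * k + 3) = 3 * n by omega] at h5
    rw [← h3 n, ← mul_assoc, mul_assoc a aD, (hca.symm.pow_right (3 * n)).eq,
      ← mul_assoc, ← pow_succ', h5]
  -- S2
  have hS2 : a * aD * (b * aD) = b * aD := by
    rw [show b * aD = b * a ^ n * aD ^ (n + 1) from by rw [mul_assoc, h4b n],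
      ← mul_assoc (a * aD) (b * a ^ n) (aD ^ (n + 1)), hS1]
  -- S4
  have hS4 : aD ^ 3 * (b * a) = aD * a * b := by
    rw [← h1, ← mul_assoc, hS3]
  -- e0
  have e0 : aD ^ (3 * n + 3) * a ^ (3 * n) = aD ^ 3 := by
    rw [show 3 * n + 3 = 2 + (3 * n + 1) by omega, pow_add, mul_assoc, h4a (3 * n),
      ← pow_succ]
  -- e2
  have e2 : a ^ n * (a * aD) = a ^ n := by
    have h6 := hp 1
    rw [show k + 1 + 1 = n + 1 by omega, show k + 1 = n by omega] at h6
    rw [← mul_assoc, ← pow_succ, h6]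
  have e3 : b * a ^ n * (a * aD) = b * a ^ n := by rw [mul_assoc, e2]
  -- S5
  have hS5 : aD ^ 3 * b * (a * aD) = aD ^ 3 * b := by
    calc aD ^ 3 * b * (a * aD)
        = aD ^ (3 * n + 3) * a ^ (3 * n) * b * (a * aD) := by rw [e0]
      _ = aD ^ (3 * n + 3) * (b * a ^ n * (a * aD)) := by
          rw [mul_assoc (aD ^ (3 * n + 3)), h3, mul_assoc]
      _ = aD ^ (3 * n + 3) * (b * a ^ n) := by rw [e3]
      _ = aD ^ (3 * n + 3) * (a ^ (3 * n) * b) := by rw [h3]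
      _ = aD ^ 3 * b := by rw [← mul_assoc, e0]
  calc aD ^ 3 * b = aD ^ 3 * b * (a * aD) := hS5.symm
    _ = aD ^ 3 * (b * a) * aD := by simp only [mul_assoc]
    _ = aD * a * b * aD := by rw [hS4]
    _ = aD * a * (b * aD) := by rw [mul_assoc]
    _ = a * aD * (b * aD) := by rw [← hc]
    _ = b * aD := hS2

theorem stmt11 {R : Type*} [Ring R] (a aD b bD : R)
    (haD : IsDrazinInverse a aD) (hbD : IsDrazinInverse b bD)
    (h1 : a ^ 3 * b = b * a) (h2 : b ^ 3 * a = a * b) :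
    aD ^ 3 * b = b * aD ∧ bD ^ 3 * a = a * bD := by
  exact ⟨drazin_key a aD b haD h1, drazin_key b bD a hbD h2⟩
end

section
/- If a, b are Drazin invertible in a ring with a³b = ba and b³a = ab, then a^D·b^D = b^D·(a^D)³ and b^D·a^D = a^D·(b^D)³; moreover a^D·b^D = b^D·a^D·b² and b^D·a^D = a^D·b^D·a². -/
section DrazinAux

variable {R : Type*} [Ring R]

lemma di_comm {a x : R} (h : IsDrazinInverse a x) : Commute a x := h.2.1

lemma di_xax {a x : R} (h : IsDrazinInverse a x) : x * (a * x) = x := by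
  rw [← mul_assoc]; exact h.1

lemma di_xxa {a x : R} (h : IsDrazinInverse a x) : x * (x * a) = x := by
  rw [← h.2.1]; exact di_xax h

/-- `x = x^(n+1) * a^n`. -/
lemma di_pow {a x : R} (h : IsDrazinInverse a x) : ∀ n : ℕ, x ^ (n + 1) * a ^ n = x
  | 0 => by simp
  | n + 1 => by
    have key : x ^ (n + 1 + 1) * a ^ (n + 1) = x ^ n * (x * (x * a)) * a ^ n := by
      rw [pow_succ x (n + 1), pow_succ x n, pow_succ' a n]
      simp only [mul_assoc]
    rw [key, di_xxa h, ← pow_succ, di_pow h n]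

/-- `a^n * x^(n+1) = x`. -/
lemma di_pow' {a x : R} (h : IsDrazinInverse a x) (n : ℕ) : a ^ n * x ^ (n + 1) = x := by
  rw [((di_comm h).pow_pow n (n + 1)).eq, di_pow h n]

/-- The eventual identity `a^(n+1) * x = a^n` holds for all `n ≥ k`. -/
lemma di_index {a x : R} (h : IsDrazinInverse a x) {k : ℕ} (hk : a ^ (k + 1) * x = a ^ k)
    (n : ℕ) : a ^ (k + n + 1) * x = a ^ (k + n) := by
  have e1 : a ^ (k + n + 1) = a ^ n * a ^ (k + 1) := by
    rw [← pow_add, show n + (k + 1) = k + n + 1 by omega]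
  rw [e1, mul_assoc, hk, ← pow_add, show n + k = k + n by omega]

/-- Intertwining: if `y * a = c * y` then `cD * y = y * aD`. -/
lemma di_intertwine {a aD c cD y : R} (ha : IsDrazinInverse a aD) (hc : IsDrazinInverse c cD)
    (hy : y * a = c * y) : cD * y = y * aD := by
  obtain ⟨k, hk⟩ := ha.2.2
  obtain ⟨m, hm⟩ := hc.2.2
  -- step 1 : y * a^n = c^n * y
  have step1 : ∀ n : ℕ, y * a ^ n = c ^ n * y := by
    intro n
    induction n with
    | zero => simp
    | succ n ih =>
      rw [pow_succ, ← mul_assoc, ih, mul_assoc, hy, ← mul_assoc, ← pow_succ]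
  -- step 2 : cD * y = cD^(n+1) * (y * a^n)
  have step2 : ∀ n : ℕ, cD * y = cD ^ (n + 1) * (y * a ^ n) := by
    intro n
    rw [step1, ← mul_assoc, (di_pow hc n)]
  -- key fact A : cD * y * (a * aD) = cD * y
  have stepA : cD * y * (a * aD) = cD * y := by
    have e1 : cD * y * (a * aD) = cD ^ (k + 1) * (y * (a ^ (k + 1) * aD)) := by
      rw [step2 k]; noncomm_ring
    rw [e1, hk, ← step2 k]
  -- key fact B : y * aD = c * cD * (y * aD)
  have stepB : y * aD = c * cD * (y * aD) := by
    have e2 : y * (a ^ m * aD ^ (m + 1)) = c ^ m * (y * aD ^ (m + 1)) := by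
      rw [← mul_assoc, step1 m, mul_assoc]
    have e3 : c * cD * c ^ m = c ^ m := by
      rw [mul_assoc, ((di_comm hc).symm.pow_right m).eq, ← mul_assoc, ← pow_succ', hm]
    calc y * aD = y * (a ^ m * aD ^ (m + 1)) := by rw [di_pow' ha m]
      _ = c ^ m * (y * aD ^ (m + 1)) := e2
      _ = c * cD * c ^ m * (y * aD ^ (m + 1)) := by rw [e3]
      _ = c * cD * (c ^ m * (y * aD ^ (m + 1))) := by rw [mul_assoc (c * cD)]
      _ = c * cD * (y * (a ^ m * aD ^ (m + 1))) := by rw [e2]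
      _ = c * cD * (y * aD) := by rw [di_pow' ha m]
  calc cD * y = cD * y * (a * aD) := stepA.symm
    _ = cD * (y * a) * aD := by noncomm_ring
    _ = cD * (c * y) * aD := by rw [hy]
    _ = c * cD * (y * aD) := by rw [← mul_assoc, ← hc.2.1]; noncomm_ring
    _ = y * aD := stepB.symm

/-- `aD^3` is a Drazin inverse of `a^3`. -/
lemma di_cube {a x : R} (h : IsDrazinInverse a x) : IsDrazinInverse (a ^ 3) (x ^ 3) := by
  have hc := di_comm h
  have hxx : x * a * x = x := h.1
  refine ⟨?_, ?_, ?_⟩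
  · -- x^3 * a^3 * x^3 = x^3
    have e1 : x ^ 3 * a ^ 3 = (x * a) ^ 3 := (hc.symm.mul_pow 3).symm
    rw [e1]
    have e2 : (x * a) ^ 3 * x ^ 3 = ((x * a) * x) ^ 3 := by
      refine (Commute.mul_pow ?_ 3).symm
      exact (Commute.refl x).mul_left hc
    rw [e2, hxx]
  · exact (hc.pow_pow 3 3).eq
  · obtain ⟨k, hk⟩ := h.2.2
    refine ⟨k, ?_⟩
    have haax : a * x * (a * x) = a * x := by
      calc a * x * (a * x) = a * (x * a * x) := by noncomm_ring
        _ = a * x := by rw [hxx]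
    have h3 : a ^ 3 * x ^ 3 = a * x := by
      rw [← hc.mul_pow 3]
      calc (a * x) ^ 3 = a * x * (a * x) * (a * x) := by noncomm_ring
        _ = a * x := by rw [haax, haax]
    have hind : a ^ (3 * k + 1) * x = a ^ (3 * k) := by
      have := di_index h hk (2 * k)
      rwa [show k + 2 * k = 3 * k by ring] at this
    calc (a ^ 3) ^ (k + 1) * x ^ 3 = (a ^ 3) ^ k * (a ^ 3 * x ^ 3) := by noncomm_ring
      _ = a ^ (3 * k) * (a * x) := by rw [h3, ← pow_mul]
      _ = a ^ (3 * k + 1) * x := by noncomm_ring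
      _ = a ^ (3 * k) := hind
      _ = (a ^ 3) ^ k := by rw [← pow_mul]

end DrazinAux

theorem stmt14 {R : Type*} [Ring R] (a aD b bD : R)
    (haD : IsDrazinInverse a aD) (hbD : IsDrazinInverse b bD)
    (h1 : a ^ 3 * b = b * a) (h2 : b ^ 3 * a = a * b) :
    aD * bD = bD * aD ^ 3 ∧ bD * aD = aD * bD ^ 3 ∧
    aD * bD = bD * aD * b ^ 2 ∧ bD * aD = aD * bD * a ^ 2 := by
  have hca := di_cube haD
  have hcb := di_cube hbD
  -- intertwining relations
  have i2 : aD ^ 3 * b = b * aD := di_intertwine haD hca h1.symm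
  have i1 : bD ^ 3 * a = a * bD := di_intertwine hbD hcb h2.symm
  have haD3 : a ^ 2 * aD ^ 3 = aD := by simpa using di_pow' haD 2
  have hbD3 : b ^ 2 * bD ^ 3 = bD := by simpa using di_pow' hbD 2
  have haD3' : aD ^ 3 * a ^ 2 = aD := by simpa using di_pow haD 2
  have hbD3' : bD ^ 3 * b ^ 2 = bD := by simpa using di_pow hbD 2
  -- spectral idempotent of a commutes with b
  have pb : a * aD * b = b * (a * aD) := by
    calc a * aD * b = a * (a ^ 2 * aD ^ 3 * b) := by rw [haD3]; noncomm_ring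
      _ = a ^ 3 * (aD ^ 3 * b) := by noncomm_ring
      _ = a ^ 3 * (b * aD) := by rw [i2]
      _ = a ^ 3 * b * aD := by noncomm_ring
      _ = b * (a * aD) := by rw [h1, mul_assoc]
  have qa : b * bD * a = a * (b * bD) := by
    calc b * bD * a = b * (b ^ 2 * bD ^ 3 * a) := by rw [hbD3]; noncomm_ring
      _ = b ^ 3 * (bD ^ 3 * a) := by noncomm_ring
      _ = b ^ 3 * (a * bD) := by rw [i1]
      _ = b ^ 3 * a * bD := by noncomm_ring
      _ = a * (b * bD) := by rw [h2, mul_assoc]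
  -- spectral idempotents commute with the Drazin inverses
  have pbD : bD * (a * aD) = a * aD * bD := di_intertwine hbD hbD pb
  have qaD : aD * (b * bD) = b * bD * aD := di_intertwine haD haD qa
  have qaD3 : (b * bD) * aD ^ 3 = aD ^ 3 * (b * bD) := by
    have hcom : Commute (b * bD) aD := qaD.symm
    exact (hcom.pow_right 3).eq
  have paD3 : (a * aD) * bD ^ 3 = bD ^ 3 * (a * aD) := by
    have hcom : Commute (a * aD) bD := pbD.symm
    exact (hcom.pow_right 3).eq
  -- absorptions
  have qbD : b * bD * bD = bD := by
    rw [hbD.2.1, mul_assoc]; exact di_xax hbD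
  have paD : a * aD * aD = aD := by
    rw [haD.2.1, mul_assoc]; exact di_xax haD
  have bDq : bD * (b * bD) = bD := di_xax hbD
  have aDp : aD * (a * aD) = aD := di_xax haD
  -- T1 : aD * bD = bD * aD^3
  have T1 : aD * bD = bD * aD ^ 3 := by
    calc aD * bD = aD * (b * bD * bD) := by rw [qbD]
      _ = aD * (b * bD) * bD := by noncomm_ring
      _ = b * bD * aD * bD := by rw [qaD]
      _ = bD * (b * aD) * bD := by rw [hbD.2.1]; noncomm_ring
      _ = bD * (aD ^ 3 * b) * bD := by rw [i2]
      _ = bD * (aD ^ 3 * (b * bD)) := by noncomm_ring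
      _ = bD * ((b * bD) * aD ^ 3) := by rw [← qaD3]
      _ = bD * (b * bD) * aD ^ 3 := by noncomm_ring
      _ = bD * aD ^ 3 := by rw [bDq]
  -- T2 : bD * aD = aD * bD^3
  have T2 : bD * aD = aD * bD ^ 3 := by
    calc bD * aD = bD * (a * aD * aD) := by rw [paD]
      _ = bD * (a * aD) * aD := by noncomm_ring
      _ = a * aD * bD * aD := by rw [pbD]
      _ = aD * (a * bD) * aD := by rw [haD.2.1]; noncomm_ring
      _ = aD * (bD ^ 3 * a) * aD := by rw [i1]
      _ = aD * (bD ^ 3 * (a * aD)) := by noncomm_ring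
      _ = aD * ((a * aD) * bD ^ 3) := by rw [← paD3]
      _ = aD * (a * aD) * bD ^ 3 := by noncomm_ring
      _ = aD * bD ^ 3 := by rw [aDp]
  -- T3 : aD * bD = bD * aD * b^2
  have T3 : aD * bD = bD * aD * b ^ 2 := by
    calc aD * bD = aD * (bD ^ 3 * b ^ 2) := by rw [hbD3']
      _ = aD * bD ^ 3 * b ^ 2 := by noncomm_ring
      _ = bD * aD * b ^ 2 := by rw [← T2]
  -- T4 : bD * aD = aD * bD * a^2
  have T4 : bD * aD = aD * bD * a ^ 2 := by
    calc bD * aD = bD * (aD ^ 3 * a ^ 2) := by rw [haD3']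
      _ = bD * aD ^ 3 * a ^ 2 := by noncomm_ring
      _ = aD * bD * a ^ 2 := by rw [← T1]
  exact ⟨T1, T2, T3, T4⟩
end

section
/- If a, b are Drazin invertible in a ring with ab³ = ba and ba³ = ab, then ab is group invertible with group inverse (ab)^♯ = b^D·a^D, and ba is group invertible with (ba)^♯ = a^D·b^D. -/
/-- `g` is a group inverse of `x`. -/
def IsGroupInverse {R : Type*} [Ring R] (x g : R) : Prop :=
  x * g * x = x ∧ g * x * g = g ∧ x * g = g * x

section Aux

variable {R : Type*} [Ring R]

private lemma pmA (u : R) (i j : ℕ) (x : R) : u^i * (u^j * x) = u^(i+j) * x := by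
  rw [← mul_assoc, ← pow_add]

private lemma psA (u : R) (j : ℕ) (x : R) : u * (u^j * x) = u^(j+1) * x := by
  rw [← mul_assoc, ← pow_succ']

private lemma spA (u : R) (j : ℕ) (x : R) : u^j * (u * x) = u^(j+1) * x := by
  rw [← mul_assoc, ← pow_succ]

/-- idempotent-type lemma : `(u*uD)*(u*uD) = u*uD`. -/
private lemma drzPP (u uD : R) (e1 : uD * u * uD = uD) (e2 : u * uD = uD * u) :
    ∀ s : ℕ, u^(s+1) * uD^(s+1) = u * uD := by
  intro s; induction s with
  | zero => simp
  | succ n ih =>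
    have h : u^(n+1+1) * uD^(n+1+1) = u * ((u^(n+1) * uD^(n+1)) * uD) := by
      rw [pow_succ' u (n+1), pow_succ uD (n+1)]
      simp only [mul_assoc]
    rw [h, ih, e2, e1]
    exact e2

private lemma drzPuD (u uD : R) (e1 : uD * u * uD = uD) (e2 : u * uD = uD * u) :
    ∀ s : ℕ, (u * uD) * uD^(s+1) = uD^(s+1) := by
  intro s
  rw [pow_succ' uD s, ← mul_assoc]
  congr 1
  rw [e2]; exact e1

private lemma drzDpow (u uD : R) (e1 : uD * u * uD = uD) (e2 : u * uD = uD * u) :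
    ∀ s : ℕ, uD = uD^(s+1) * u^s := by
  intro s; induction s with
  | zero => simp
  | succ n ih =>
    have h : uD^(n+1+1) * u^(n+1) = uD * ((uD^(n+1) * u^n) * u) := by
      rw [pow_succ' uD (n+1), pow_succ u n]
      simp only [mul_assoc]
    rw [h, ← ih, ← e2, ← mul_assoc]
    exact e1.symm

private lemma drzAbs (u uD : R) (k : ℕ) (hk : u^(k+1) * uD = u^k) :
    ∀ m : ℕ, k ≤ m → u^m * (u * uD) = u^m := by
  intro m hm
  obtain ⟨d, rfl⟩ := Nat.exists_eq_add_of_le hm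
  rw [← mul_assoc, ← pow_succ]
  calc u^(k+d+1) * uD = u^d * (u^(k+1) * uD) := by
        rw [pmA, show d + (k+1) = k+d+1 from by ring]
    _ = u^(k+d) := by rw [hk, ← pow_add, show d + k = k + d from by ring]

end Aux

private theorem key {R : Type*} [Ring R] (a aD b bD : R)
    (haD : IsDrazinInverse a aD) (hbD : IsDrazinInverse b bD)
    (h1 : a * b ^ 3 = b * a) (h2 : b * a ^ 3 = a * b) :
    IsGroupInverse (a * b) (bD * aD) := by
  obtain ⟨ha1, ha2, ka, hka⟩ := haD
  obtain ⟨hb1, hb2, kb, hkb⟩ := hbD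
  -- straightening: move `a` left past powers of `b`
  have hA : ∀ (j : ℕ) (x : R), b^j * (a * x) = a * (b^(3*j) * x) := by
    intro j
    induction j with
    | zero => intro x; simp
    | succ n ih =>
      intro x
      rw [show 3*(n+1) = 3*n+3 from by ring]
      rw [pow_succ b n, mul_assoc]
      rw [← mul_assoc b a x, ← h1, mul_assoc]
      rw [ih (b^3 * x), pmA]
  have hB : ∀ (j : ℕ) (x : R), a^j * (b * x) = b * (a^(3*j) * x) := by
    intro j
    induction j with
    | zero => intro x; simp
    | succ n ih =>
      intro x
      rw [show 3*(n+1) = 3*n+3 from by ring]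
      rw [pow_succ a n, mul_assoc]
      rw [← mul_assoc a b x, ← h2, mul_assoc]
      rw [ih (a^3 * x), pmA]
  have hA' : ∀ (m j : ℕ) (x : R), b^j * (a^m * x) = a^m * (b^(3^m*j) * x) := by
    intro m
    induction m with
    | zero => intro j x; simp
    | succ n ih =>
      intro j x
      rw [show (3:ℕ)^(n+1)*j = 3^n*(3*j) from by ring]
      rw [pow_succ' a n, mul_assoc a (a^n) x, hA j (a^n * x), ih (3*j) x, mul_assoc]
  have hB' : ∀ (m j : ℕ) (x : R), a^j * (b^m * x) = b^m * (a^(3^m*j) * x) := by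
    intro m
    induction m with
    | zero => intro j x; simp
    | succ n ih =>
      intro j x
      rw [show (3:ℕ)^(n+1)*j = 3^n*(3*j) from by ring]
      rw [pow_succ' b n, mul_assoc b (b^n) x, hB j (b^n * x), ih (3*j) x, mul_assoc]
  have hA1 : ∀ (m j : ℕ), b^j * a^m = a^m * b^(3^m*j) := by
    intro m j
    have := hA' m j 1
    simpa using this
  have hB1 : ∀ (m j : ℕ), a^j * b^m = b^m * a^(3^m*j) := by
    intro m j
    have := hB' m j 1
    simpa using this
  -- core identities
  have hab3 : a * b = a^3 * b^27 := by
    have e : a * b = b^1 * (a^3 * 1) := by rw [pow_one, mul_one]; exact h2.symm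
    rw [e, hA' 3 1 1, mul_one]
    norm_num
  have hba3 : b * a = b^3 * a^27 := by
    have e : b * a = a^1 * (b^3 * 1) := by rw [pow_one, mul_one]; exact h1.symm
    rw [e, hB' 3 1 1, mul_one]
    norm_num
  have hFab : ∀ n : ℕ, a * b = a^(2*n+1) * b^(26*n+1) := by
    intro n
    induction n with
    | zero => simp
    | succ n ih =>
      rw [show 2*(n+1)+1 = 2*n+3 from by ring, show 26*(n+1)+1 = 27+26*n from by ring]
      calc a * b = a^(2*n+1) * b^(26*n+1) := ih
        _ = a^(2*n) * ((a * b) * b^(26*n)) := by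
            rw [pow_succ a (2*n), pow_succ' b (26*n)]
            simp only [mul_assoc]
        _ = a^(2*n) * ((a^3 * b^27) * b^(26*n)) := by rw [hab3]
        _ = a^(2*n+3) * b^(27+26*n) := by
            simp only [mul_assoc]
            rw [pmA, ← pow_add]

  -- Drazin utilities instantiated
  have paPP := drzPP a aD ha1 ha2
  have paPuD := drzPuD a aD ha1 ha2
  have paAbs := drzAbs a aD ka hka
  have pbPP := drzPP b bD hb1 hb2
  have pbDpow := drzDpow b bD hb1 hb2
  have pbAbs := drzAbs b bD kb hkb
  have paPPn : ∀ s : ℕ, 1 ≤ s → a^s * aD^s = a * aD := by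
    intro s hs
    obtain ⟨d, rfl⟩ := Nat.exists_eq_add_of_le hs
    rw [show 1 + d = d + 1 from by ring]
    exact paPP d
  have haDdef : a * (aD * aD) = aD := by rw [← mul_assoc, ha2]; exact ha1
  have hbaD : b * aD = b^3 * (a^25 * (a * aD)) := by
    calc b * aD = b * (a * (aD * aD)) := by rw [haDdef]
      _ = (b * a) * (aD * aD) := by rw [← mul_assoc]
      _ = (b^3 * a^27) * (aD * aD) := by rw [hba3]
      _ = b^3 * (a^25 * (a^2 * (aD * aD))) := by
            rw [show (27:ℕ) = 25+2 from by norm_num, pow_add]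
            simp only [mul_assoc]
      _ = b^3 * (a^25 * (a * aD)) := by
            rw [show a^2 * (aD * aD) = a^2 * aD^2 from by rw [pow_two aD],
                paPPn 2 (by norm_num)]
  have hbNaD : ∀ N : ℕ, b^(N+1) * aD = b^(N+3) * (a^25 * (a * aD)) := by
    intro N
    calc b^(N+1) * aD = b^N * (b * aD) := by rw [pow_succ, mul_assoc]
      _ = b^N * (b^3 * (a^25 * (a * aD))) := by rw [hbaD]
      _ = b^(N+3) * (a^25 * (a * aD)) := by rw [pmA]
  have hbNaD26 : ∀ N : ℕ, b^(N+1) * aD^26 = b^(N+3) * (a * aD) := by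
    intro N
    calc b^(N+1) * aD^26 = (b^(N+1) * aD) * aD^25 := by
          rw [show (26:ℕ) = 25+1 from by norm_num, pow_succ' aD 25, ← mul_assoc]
      _ = (b^(N+3) * (a^25 * (a * aD))) * aD^25 := by rw [hbNaD N]
      _ = b^(N+3) * (a^25 * ((a * aD) * aD^25)) := by simp only [mul_assoc]
      _ = b^(N+3) * (a^25 * aD^25) := by
          rw [show (25:ℕ) = 24+1 from by norm_num, paPuD 24]
      _ = b^(N+3) * (a * aD) := by rw [paPPn 25 (by norm_num)]
  have hbNaD25 : ∀ N : ℕ, b^(N+1) * aD^25 = b^(N+3) * (a * (a * aD)) := by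
    intro N
    calc b^(N+1) * aD^25 = (b^(N+1) * aD) * aD^24 := by
          rw [show (25:ℕ) = 24+1 from by norm_num, pow_succ' aD 24, ← mul_assoc]
      _ = (b^(N+3) * (a^25 * (a * aD))) * aD^24 := by rw [hbNaD N]
      _ = b^(N+3) * (a^25 * ((a * aD) * aD^24)) := by simp only [mul_assoc]
      _ = b^(N+3) * (a^25 * aD^24) := by
          rw [show (24:ℕ) = 23+1 from by norm_num, paPuD 23]
      _ = b^(N+3) * (a * (a^24 * aD^24)) := by
          rw [show (25:ℕ) = 24+1 from by norm_num, pow_succ' a 24, mul_assoc]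
      _ = b^(N+3) * (a * (a * aD)) := by rw [paPPn 24 (by norm_num)]
  have habs : ∀ (W M : ℕ), ka ≤ W → a^W * (b^M * (a * aD)) = a^W * b^M := by
    intro W M hW
    have h3 : ka ≤ 3^M * W := le_trans hW (Nat.le_mul_of_pos_left W (by positivity))
    calc a^W * (b^M * (a * aD)) = b^M * (a^(3^M*W) * (a * aD)) := hB' M W _
      _ = b^M * a^(3^M*W) := by rw [paAbs _ h3]
      _ = a^W * b^M := (hB1 M W).symm
  have hC26 : ∀ (d S : ℕ), a^(ka+d) * b^(S+1) = a^(ka+d+26) * b^(3^26*(S+1)+2) := by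
    intro d S
    obtain ⟨N, hN⟩ : ∃ N, 3^26*(S+1) = N+1 :=
      ⟨3^26*(S+1)-1, by have h : 0 < 3^26*(S+1) := by positivity
                        omega⟩
    calc a^(ka+d) * b^(S+1) = a^(ka+d) * (b^(S+1) * (a * aD)) := (habs _ _ (by omega)).symm
      _ = a^(ka+d) * (b^(S+1) * (a^26 * aD^26)) := by rw [paPPn 26 (by norm_num)]
      _ = a^(ka+d) * (a^26 * (b^(3^26*(S+1)) * aD^26)) := by rw [hA' 26 (S+1) (aD^26)]
      _ = a^(ka+d+26) * (b^(N+1) * aD^26) := by rw [pmA, hN]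
      _ = a^(ka+d+26) * (b^(N+3) * (a * aD)) := by rw [hbNaD26 N]
      _ = a^(ka+d+26) * b^(N+3) := habs _ _ (by omega)
      _ = a^(ka+d+26) * b^(3^26*(S+1)+2) := by rw [show N+3 = 3^26*(S+1)+2 from by rw [hN]]
  have hC25 : ∀ (d S : ℕ), a^(ka+d) * b^(S+1) = a^(ka+d+26) * b^(3^26*(S+1)+6) := by
    intro d S
    obtain ⟨N, hN⟩ : ∃ N, 3^25*(S+1) = N+1 :=
      ⟨3^25*(S+1)-1, by have h : 0 < 3^25*(S+1) := by positivity
                        omega⟩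
    have hNN : 3*(N+3) = 3^26*(S+1)+6 := by
      have e : (3:ℕ)^26*(S+1) = 3*(3^25*(S+1)) := by ring
      rw [e, hN]; ring
    calc a^(ka+d) * b^(S+1) = a^(ka+d) * (b^(S+1) * (a * aD)) := (habs _ _ (by omega)).symm
      _ = a^(ka+d) * (b^(S+1) * (a^25 * aD^25)) := by rw [paPPn 25 (by norm_num)]
      _ = a^(ka+d) * (a^25 * (b^(3^25*(S+1)) * aD^25)) := by rw [hA' 25 (S+1) (aD^25)]
      _ = a^(ka+d+25) * (b^(N+1) * aD^25) := by rw [pmA, hN]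
      _ = a^(ka+d+25) * (b^(N+3) * (a * (a * aD))) := by rw [hbNaD25 N]
      _ = a^(ka+d+25) * (a * (b^(3*(N+3)) * (a * aD))) := by rw [hA (N+3) (a*aD)]
      _ = a^(ka+d+25+1) * (b^(3*(N+3)) * (a * aD)) := by rw [spA]
      _ = a^(ka+d+25+1) * b^(3*(N+3)) := habs _ _ (by omega)
      _ = a^(ka+d+26) * b^(3^26*(S+1)+6) := by
          rw [show ka+d+25+1 = ka+d+26 from by ring, hNN]
  have hPer4 : ∀ (d T : ℕ), a^(ka+26+d) * b^(3^26+2+T) = a^(ka+26+d) * b^(3^26+6+T) := by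
    intro d T
    have e3 : a^(ka+d+26) * b^(3^26*(0+1)+2) = a^(ka+d+26) * b^(3^26*(0+1)+6) :=
      (hC26 d 0).symm.trans (hC25 d 0)
    have e4 := congrArg (· * b^T) e3
    simp only [mul_assoc, ← pow_add] at e4
    rw [show ka+26+d = ka+d+26 from by ring,
        show 3^26+2+T = 3^26*(0+1)+2+T from by ring,
        show 3^26+6+T = 3^26*(0+1)+6+T from by ring]
    exact e4
  have hPerIter : ∀ (d M c : ℕ), 3^26+2 ≤ M →
      a^(ka+26+d) * b^M = a^(ka+26+d) * b^(M+4*c) := by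
    intro d M c hM
    induction c with
    | zero => simp
    | succ n ih =>
      have h := hPer4 d (M+4*n-(3^26+2))
      rw [show 3^26+2+(M+4*n-(3^26+2)) = M+4*n from by omega,
          show 3^26+6+(M+4*n-(3^26+2)) = M+4*(n+1) from by omega] at h
      exact ih.trans h

  -- pure monomial form of the candidate group inverse
  have hw0 : bD * aD = (b * bD) * (b^1 * (a^25 * (a * aD))) := by
    calc bD * aD = (bD^(1+1) * b^1) * aD := by rw [← pbDpow 1]
      _ = bD^(1+1) * (b^1 * aD) := by rw [mul_assoc]
      _ = bD^(1+1) * (b^3 * (a^25 * (a * aD))) := by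
          have h0 := hbNaD 0
          simp only [Nat.zero_add] at h0
          rw [h0]
      _ = bD^(1+1) * (b^(1+1) * (b^1 * (a^25 * (a * aD)))) := by
          rw [pmA b (1+1) 1, show (1:ℕ)+1+1 = 3 from by norm_num]
      _ = (bD^(1+1) * b^(1+1)) * (b^1 * (a^25 * (a * aD))) := by rw [← mul_assoc]
      _ = (b^(1+1) * bD^(1+1)) * (b^1 * (a^25 * (a * aD))) := by
          have hc : Commute b bD := hb2
          rw [(hc.symm.pow_pow (1+1) (1+1)).eq]
      _ = (b * bD) * (b^1 * (a^25 * (a * aD))) := by rw [pbPP 1]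
  have hbP : ∀ N : ℕ, b^(N+1) * (a * aD) = b^(N+3) * (a^26 * (a * aD)) := by
    intro N
    calc b^(N+1) * (a * aD) = b^N * (b * (a * aD)) := by rw [pow_succ, mul_assoc]
      _ = b^N * ((b * a) * aD) := by rw [← mul_assoc b a aD]
      _ = b^N * ((b^3 * a^27) * aD) := by rw [hba3]
      _ = b^(N+3) * (a^27 * aD) := by rw [mul_assoc, pmA]
      _ = b^(N+3) * (a^26 * (a * aD)) := by
          rw [show (27:ℕ) = 26+1 from by norm_num, pow_succ a 26, mul_assoc (a^26) a aD]
  have hcaP : (a * aD) * a = a * (a * aD) := by rw [mul_assoc, ← ha2]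
  have hPcm : ∀ M : ℕ, a^M * (a * aD) = (a * aD) * a^M := by
    intro M
    induction M with
    | zero => simp
    | succ n ih =>
      calc a^(n+1) * (a * aD) = a^n * (a * (a * aD)) := by rw [pow_succ, mul_assoc]
        _ = a^n * ((a * aD) * a) := by rw [← hcaP]
        _ = (a^n * (a * aD)) * a := by rw [← mul_assoc]
        _ = ((a * aD) * a^n) * a := by rw [ih]
        _ = (a * aD) * a^(n+1) := by rw [mul_assoc, ← pow_succ]
  have hpad : ∀ N M : ℕ, b^(N+1) * (a^M * (a * aD)) = b^(N+3) * (a^(26+M) * (a * aD)) := by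
    intro N M
    calc b^(N+1) * (a^M * (a * aD)) = b^(N+1) * ((a * aD) * a^M) := by rw [hPcm]
      _ = (b^(N+1) * (a * aD)) * a^M := by rw [← mul_assoc]
      _ = (b^(N+3) * (a^26 * (a * aD))) * a^M := by rw [hbP]
      _ = b^(N+3) * (a^26 * ((a * aD) * a^M)) := by simp only [mul_assoc]
      _ = b^(N+3) * (a^26 * (a^M * (a * aD))) := by rw [← hPcm]
      _ = b^(N+3) * (a^(26+M) * (a * aD)) := by rw [pmA]
  have hpadIter : ∀ c : ℕ, bD * aD = (b * bD) * (b^(2*c+1) * (a^(26*c+25) * (a * aD))) := by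
    intro c
    induction c with
    | zero =>
      rw [show 2*0+1 = 1 from by norm_num, show 26*0+25 = 25 from by norm_num]
      exact hw0
    | succ n ih =>
      rw [show 2*(n+1)+1 = (2*n+1)+2 from by ring, show 26*(n+1)+25 = 26+(26*n+25) from by ring]
      rw [ih, hpad (2*n) (26*n+25), show 2*n+3 = 2*n+1+2 from by ring]
  have hQcm : ∀ M : ℕ, b^M * (b * bD) = (b * bD) * b^M := by
    have hcbQ : (b * bD) * b = b * (b * bD) := by rw [mul_assoc, ← hb2]
    intro M
    induction M with
    | zero => simp
    | succ n ih =>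
      calc b^(n+1) * (b * bD) = b^n * (b * (b * bD)) := by rw [pow_succ, mul_assoc]
        _ = b^n * ((b * bD) * b) := by rw [← hcbQ]
        _ = (b^n * (b * bD)) * b := by rw [← mul_assoc]
        _ = ((b * bD) * b^n) * b := by rw [ih]
        _ = (b * bD) * b^(n+1) := by rw [mul_assoc, ← pow_succ]
  have hw : ∀ t : ℕ, ka + kb ≤ t → bD * aD = b^(2*t+1) * a^(26*t+25) := by
    intro t ht
    have h := hpadIter t
    rw [paAbs (26*t+25) (by omega), ← mul_assoc] at h
    have hq : (b * bD) * b^(2*t+1) = b^(2*t+1) := by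
      rw [← hQcm, pbAbs (2*t+1) (by omega)]
    rw [hq] at h
    exact h
  have h3odd : ∀ k : ℕ, ∃ u, (3:ℕ)^(2*k+1) = 4*u+3 := by
    intro k
    induction k with
    | zero => exact ⟨0, by norm_num⟩
    | succ n ih =>
      obtain ⟨u, hu⟩ := ih
      exact ⟨9*u+6, by rw [show 2*(n+1)+1 = (2*n+1)+2 from by ring, pow_add, hu]; ring⟩
  -- the working exponent
  obtain ⟨t, hkat, ht3⟩ : ∃ t, ka + kb ≤ t ∧ 3^26 ≤ t :=
    ⟨3^26 + ka + kb, by omega, by omega⟩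
  have hwt := hw t hkat
  have L : (a*b) * (bD*aD) = a^(26*t+26) * b^(3^(26*t+25)*(2*t+2)) := by
    rw [hwt]
    calc (a*b) * (b^(2*t+1) * a^(26*t+25))
        = a * (b^(2*t+1+1) * a^(26*t+25)) := by rw [mul_assoc, psA]
      _ = a * (a^(26*t+25) * b^(3^(26*t+25)*(2*t+1+1))) := by rw [hA1]
      _ = a^(26*t+26) * b^(3^(26*t+25)*(2*t+2)) := by
          rw [psA, show 26*t+25+1 = 26*t+26 from by ring, show 2*t+1+1 = 2*t+2 from by ring]
  have Rr : (bD*aD) * (a*b) = a^(26*t+26) * b^(3^(26*t+26)*(2*t+1)+1) := by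
    rw [hwt]
    calc (b^(2*t+1) * a^(26*t+25)) * (a*b)
        = b^(2*t+1) * (a^(26*t+25) * (a * b)) := by rw [mul_assoc]
      _ = b^(2*t+1) * (a^(26*t+25+1) * b) := by
          rw [← mul_assoc (a^(26*t+25)) a b, ← pow_succ]
      _ = a^(26*t+25+1) * (b^(3^(26*t+25+1)*(2*t+1)) * b) := by
          rw [hA' (26*t+25+1) (2*t+1) b]
      _ = a^(26*t+26) * b^(3^(26*t+26)*(2*t+1)+1) := by
          rw [show 26*t+25+1 = 26*t+26 from by ring, ← pow_succ]
  obtain ⟨u, hu⟩ := h3odd (13*t+12)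
  have hup : (3:ℕ)^(26*t+25) = 4*u+3 := by
    rw [show 26*t+25 = 2*(13*t+12)+1 from by ring]; exact hu
  have q2 : (3:ℕ)^27 ≤ 3^(26*t+25) := Nat.pow_le_pow_right (by norm_num) (by omega)
  have q1 : (3:ℕ)^26+2 ≤ 3^27 := by norm_num
  have hu14 : 14 ≤ u := by
    have : (59:ℕ) ≤ 3^27 := by norm_num
    omega
  refine ⟨?_, ?_, ?_⟩
  · -- (a*b) * (bD*aD) * (a*b) = a*b
    have htar : a * b = a^(26*t+27) * b^(338*t+339) := by
      have h := hFab (13*t+13)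
      rw [show 2*(13*t+13)+1 = 26*t+27 from by ring,
          show 26*(13*t+13)+1 = 338*t+339 from by ring] at h
      exact h
    obtain ⟨u', huu⟩ : ∃ u', u = u'+14 := ⟨u-14, by omega⟩
    have hE : 3*(3^(26*t+25)*(2*t+2))+1 = (338*t+339) + 4*((6*u'+4)*(t+1)) := by
      rw [hup, huu]; ring
    have hbound : 3^26+2 ≤ 338*t+339 := by omega
    obtain ⟨d, hd⟩ : ∃ d, 26*t+27 = ka+26+d := ⟨26*t+1-ka, by omega⟩
    calc (a*b) * (bD*aD) * (a*b)
        = (a^(26*t+26) * b^(3^(26*t+25)*(2*t+2))) * (a*b) := by rw [L]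
      _ = a^(26*t+26) * (b^(3^(26*t+25)*(2*t+2)) * (a * b)) := by rw [mul_assoc]
      _ = a^(26*t+26) * (a * (b^(3*(3^(26*t+25)*(2*t+2))) * b)) := by
          rw [hA (3^(26*t+25)*(2*t+2)) b]
      _ = a^(26*t+26+1) * (b^(3*(3^(26*t+25)*(2*t+2))) * b) := by rw [spA]
      _ = a^(26*t+27) * b^(3*(3^(26*t+25)*(2*t+2))+1) := by
          rw [show 26*t+26+1 = 26*t+27 from by ring, ← pow_succ]
      _ = a^(26*t+27) * b^((338*t+339) + 4*((6*u'+4)*(t+1))) := by rw [hE]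
      _ = a^(26*t+27) * b^(338*t+339) := by
          rw [hd]; exact (hPerIter d _ _ hbound).symm
      _ = a * b := htar.symm
  · -- (bD*aD) * (a*b) * (bD*aD) = bD*aD
    have hwt2 := hw (2*t+1) (by omega)
    rw [show 2*(2*t+1)+1 = 4*t+3 from by ring, show 26*(2*t+1)+25 = 52*t+51 from by ring] at hwt2
    have htarw : bD * aD = a^(52*t+51) * b^(3^(52*t+51)*(4*t+3)) :=
      hwt2.trans (hA1 (52*t+51) (4*t+3))
    have hGF : 3^(52*t+51)*(4*t+3)
        = 3^(26*t+25)*((3^(26*t+26)*(2*t+1)+1)+(2*t+1)) + 4*((2*t+2)*((4*u+3)*(3*u+2))) := by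
      rw [show 52*t+51 = (26*t+25)+((26*t+25)+1) from by ring, pow_add, pow_succ 3 (26*t+25),
          hup]
      ring
    have hbound : 3^26+2 ≤ 3^(26*t+25)*((3^(26*t+26)*(2*t+1)+1)+(2*t+1)) := by
      have q3 : (3:ℕ)^(26*t+25) ≤ 3^(26*t+25)*((3^(26*t+26)*(2*t+1)+1)+(2*t+1)) :=
        Nat.le_mul_of_pos_right _ (by positivity)
      omega
    obtain ⟨d, hd⟩ : ∃ d, 52*t+51 = ka+26+d := ⟨52*t+25-ka, by omega⟩
    calc (bD*aD) * (a*b) * (bD*aD)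
        = (a^(26*t+26) * b^(3^(26*t+26)*(2*t+1)+1)) * (b^(2*t+1) * a^(26*t+25)) := by
          rw [Rr, hwt]
      _ = a^(26*t+26) * (b^(3^(26*t+26)*(2*t+1)+1) * (b^(2*t+1) * a^(26*t+25))) := by
          rw [mul_assoc]
      _ = a^(26*t+26) * (b^((3^(26*t+26)*(2*t+1)+1)+(2*t+1)) * a^(26*t+25)) := by rw [pmA]
      _ = a^(26*t+26) * (a^(26*t+25) * b^(3^(26*t+25)*((3^(26*t+26)*(2*t+1)+1)+(2*t+1)))) := by
          rw [hA1]
      _ = a^(26*t+26+(26*t+25)) * b^(3^(26*t+25)*((3^(26*t+26)*(2*t+1)+1)+(2*t+1))) := by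
          rw [pmA]
      _ = a^(52*t+51) * b^(3^(26*t+25)*((3^(26*t+26)*(2*t+1)+1)+(2*t+1)) + 4*((2*t+2)*((4*u+3)*(3*u+2)))) := by
          rw [show 26*t+26+(26*t+25) = 52*t+51 from by ring, hd]
          exact hPerIter d _ _ hbound
      _ = a^(52*t+51) * b^(3^(52*t+51)*(4*t+3)) := by rw [← hGF]
      _ = bD * aD := htarw.symm
  · -- (a*b) * (bD*aD) = (bD*aD) * (a*b)
    have hE : 3^(26*t+26)*(2*t+1)+1 = 3^(26*t+25)*(2*t+2) + 4*(4*u*t+u+3*t+1) := by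
      rw [show 26*t+26 = (26*t+25)+1 from by ring, pow_succ 3 (26*t+25), hup]; ring
    have hbound : 3^26+2 ≤ 3^(26*t+25)*(2*t+2) := by
      have q3 : (3:ℕ)^(26*t+25) ≤ 3^(26*t+25)*(2*t+2) :=
        Nat.le_mul_of_pos_right _ (by omega)
      omega
    obtain ⟨d, hd⟩ : ∃ d, 26*t+26 = ka+26+d := ⟨26*t-ka, by omega⟩
    calc (a*b) * (bD*aD) = a^(26*t+26) * b^(3^(26*t+25)*(2*t+2)) := L
      _ = a^(26*t+26) * b^(3^(26*t+25)*(2*t+2) + 4*(4*u*t+u+3*t+1)) := by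
          rw [hd]; exact hPerIter d _ _ hbound
      _ = a^(26*t+26) * b^(3^(26*t+26)*(2*t+1)+1) := by rw [← hE]
      _ = (bD*aD) * (a*b) := Rr.symm


theorem stmt15 {R : Type*} [Ring R] (a aD b bD : R)
    (haD : IsDrazinInverse a aD) (hbD : IsDrazinInverse b bD)
    (h1 : a * b ^ 3 = b * a) (h2 : b * a ^ 3 = a * b) :
    IsGroupInverse (a * b) (bD * aD) ∧ IsGroupInverse (b * a) (aD * bD) :=
  ⟨key a aD b bD haD hbD h1 h2, key b bD a aD hbD haD h2 h1⟩
end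

section
/- If a, b are Drazin invertible in a ring with ab³ = ba and ba³ = ab, then a^D·b^D = b³·a and b^D·a^D = a³·b. -/
namespace SolAux
variable {R : Type*} [Ring R]

section basic
variable {a x : R}

lemma dcomm (h : IsDrazinInverse a x) : Commute a x := h.2.1

lemma dxax (h : IsDrazinInverse a x) : x * a * x = x := h.1

lemma dshift_aux {k : ℕ} (hk : a ^ (k+1) * x = a ^ k) :
    ∀ d, a ^ (k+d+1) * x = a ^ (k+d) := by
  intro d
  induction d with
  | zero => simpa using hk
  | succ n ih =>
    have e1 : a ^ (k+(n+1)+1) = a * a ^ (k+n+1) := by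
      rw [← pow_succ']; ring_nf
    calc a ^ (k+(n+1)+1) * x = a * (a ^ (k+n+1) * x) := by rw [e1, mul_assoc]
      _ = a * a ^ (k+n) := by rw [ih]
      _ = a ^ (k+(n+1)) := by rw [← pow_succ']; ring_nf

/-- shift: `a^(j+1) * x = a^j` for `j ≥ k`. -/
lemma dshift (h : IsDrazinInverse a x) {k : ℕ} (hk : a ^ (k+1) * x = a ^ k) :
    ∀ j, k ≤ j → a ^ (j+1) * x = a ^ j := by
  intro j hj
  obtain ⟨d, rfl⟩ := Nat.exists_eq_add_of_le hj
  exact dshift_aux hk d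

/-- `x * a^(j+1) = a^j` for `j ≥ k`. -/
lemma dshift' (h : IsDrazinInverse a x) {k : ℕ} (hk : a ^ (k+1) * x = a ^ k)
    (j : ℕ) (hj : k ≤ j) : x * a ^ (j+1) = a ^ j := by
  rw [((dcomm h).symm.pow_right (j+1)).eq]
  exact dshift h hk j hj

/-- L3 : `x^(m+1) * a^m = x`. -/
lemma dxxa (h : IsDrazinInverse a x) : ∀ m, x ^ (m+1) * a ^ m = x := by
  intro m
  induction m with
  | zero => simp
  | succ n ih =>
    have e1 : x ^ (n+1+1) * a ^ (n+1) = x * ((x ^ (n+1) * a ^ n) * a) := by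
      rw [pow_succ' x (n+1), pow_succ a n]; simp only [mul_assoc]
    calc x ^ (n+1+1) * a ^ (n+1) = x * ((x ^ (n+1) * a ^ n) * a) := e1
      _ = x * (x * a) := by rw [ih]
      _ = x * (a * x) := by rw [(dcomm h).eq]
      _ = x := by rw [← mul_assoc, dxax h]

/-- L5 : `a^m * x^m = a*x` for `m ≥ 1`. -/
lemma dpowe (h : IsDrazinInverse a x) : ∀ m, 1 ≤ m → a ^ m * x ^ m = a * x := by
  intro m hm
  induction m with
  | zero => omega
  | succ n ih =>
    rcases Nat.lt_or_ge n 1 with h1 | h1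
    · interval_cases n
      · simp
    · have e1 : a ^ (n+1) * x ^ (n+1) = a * ((a ^ n * x ^ n) * x) := by
        rw [pow_succ' a n, pow_succ x n]; simp only [mul_assoc]
      calc a ^ (n+1) * x ^ (n+1) = a * ((a ^ n * x ^ n) * x) := e1
        _ = a * ((a * x) * x) := by rw [ih h1]
        _ = a * ((x * a) * x) := by rw [(dcomm h).eq]
        _ = a * x := by rw [dxax h]

/-- L6 : `x^m * a^m = a*x` for `m ≥ 1`. -/
lemma dpowe' (h : IsDrazinInverse a x) (m : ℕ) (hm : 1 ≤ m) : x ^ m * a ^ m = a * x := by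
  rw [← ((dcomm h).pow_pow m m).eq]
  exact dpowe h m hm

/-- L7 : `a * x^(j+1) = x^j` for `j ≥ 1`. -/
lemma daxx (h : IsDrazinInverse a x) (j : ℕ) (hj : 1 ≤ j) : a * x ^ (j+1) = x ^ j := by
  obtain ⟨i, rfl⟩ := Nat.exists_eq_add_of_le hj
  have hax2 : a * x ^ 2 = x := by
    calc a * x ^ 2 = (a * x) * x := by rw [pow_two, ← mul_assoc]
      _ = (x * a) * x := by rw [(dcomm h).eq]
      _ = x := dxax h
  have e1 : x ^ (1+i+1) = x ^ 2 * x ^ i := by rw [← pow_add]; ring_nf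
  calc a * x ^ (1+i+1) = (a * x ^ 2) * x ^ i := by rw [e1, mul_assoc]
    _ = x * x ^ i := by rw [hax2]
    _ = x ^ (1+i) := by rw [← pow_succ']; ring_nf

/-- L8 : `a^j * (a*x) = a^j` for `j ≥ k`. -/
lemma dpow_e (h : IsDrazinInverse a x) {k : ℕ} (hk : a ^ (k+1) * x = a ^ k)
    (j : ℕ) (hj : k ≤ j) : a ^ j * (a * x) = a ^ j := by
  calc a ^ j * (a * x) = (a ^ j * a) * x := by simp only [mul_assoc]
    _ = a ^ (j+1) * x := by rw [pow_succ]
    _ = a ^ j := dshift h hk j hj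

/-- `(a*x) * a^j = a^j` for `j ≥ k`. -/
lemma de_pow (h : IsDrazinInverse a x) {k : ℕ} (hk : a ^ (k+1) * x = a ^ k)
    (j : ℕ) (hj : k ≤ j) : (a * x) * a ^ j = a ^ j := by
  have hc : Commute (a * x) (a ^ j) :=
    ((Commute.refl a).mul_left (dcomm h).symm).pow_right j
  rw [hc.eq]; exact dpow_e h hk j hj

/-- commutant lemma: anything commuting with `a` commutes with `x`. -/
lemma dcommutant (h : IsDrazinInverse a x) (c : R) (hca : c * a = a * c) : c * x = x * c := by
  obtain ⟨k, hk⟩ := h.2.2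
  have hkn : k ≤ k+1 := by omega
  have hCa : Commute c a := hca
  have hA : x * c = (x * a) * (c * x) := by
    calc x * c = (x ^ (k+1+1) * a ^ (k+1)) * c := by rw [dxxa h]
      _ = x ^ (k+1+1) * (a ^ (k+1) * c) := by simp only [mul_assoc]
      _ = x ^ (k+1+1) * (c * a ^ (k+1)) := by rw [(hCa.pow_right (k+1)).eq]
      _ = x ^ (k+1+1) * (c * (a ^ (k+1+1) * x)) := by rw [dshift h hk (k+1) hkn]
      _ = (x ^ (k+1+1) * (c * a ^ (k+1+1))) * x := by simp only [mul_assoc]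
      _ = (x ^ (k+1+1) * (a ^ (k+1+1) * c)) * x := by rw [(hCa.pow_right (k+1+1)).eq]
      _ = ((x ^ (k+1+1) * a ^ (k+1)) * a) * (c * x) := by
            rw [pow_succ a (k+1)]; simp only [mul_assoc]
      _ = (x * a) * (c * x) := by rw [dxxa h]
  have hB : c * x = (x * c) * (a * x) := by
    calc c * x = c * (x ^ (k+1+1) * a ^ (k+1)) := by rw [dxxa h]
      _ = c * (a ^ (k+1) * x ^ (k+1+1)) := by rw [((dcomm h).symm.pow_pow (k+1+1) (k+1)).eq]
      _ = (c * a ^ (k+1)) * x ^ (k+1+1) := by simp only [mul_assoc]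
      _ = (a ^ (k+1) * c) * x ^ (k+1+1) := by rw [(hCa.pow_right (k+1)).eq]
      _ = ((x * a ^ (k+1+1)) * c) * x ^ (k+1+1) := by rw [dshift' h hk (k+1) hkn]
      _ = x * ((a ^ (k+1+1) * c) * x ^ (k+1+1)) := by simp only [mul_assoc]
      _ = x * ((c * a ^ (k+1+1)) * x ^ (k+1+1)) := by rw [(hCa.pow_right (k+1+1)).eq]
      _ = (x * c) * (a ^ (k+1+1) * x ^ (k+1+1)) := by simp only [mul_assoc]
      _ = (x * c) * (a * x) := by rw [dpowe h (k+1+1) (by omega)]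
  have hfin : x * c = c * x := by
    calc x * c = (x * a) * (c * x) := hA
      _ = (x * a) * ((x * c) * (a * x)) := by rw [← hB]
      _ = (((x * a) * x) * c) * (a * x) := by simp only [mul_assoc]
      _ = (x * c) * (a * x) := by rw [show (x * a) * x = x from dxax h]
      _ = c * x := hB.symm
  exact hfin.symm

end basic

/-- W1 : `a^m * b = b * a^(3m)` from `b * a^3 = a * b`. -/
lemma powW1 (a b : R) (h2 : b * (a * (a * a)) = a * b) :
    ∀ m, a ^ m * b = b * a ^ (3*m) := by
  intro m
  induction m with
  | zero => simp
  | succ n ih =>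
    have e2 : b * (a * (a * a)) * a ^ (3*n) = b * a ^ (3*(n+1)) := by
      have : (a * (a * a)) * a ^ (3*n) = a ^ (3*(n+1)) := by
        rw [show a * (a * a) = a ^ 3 by rw [pow_succ, pow_succ, pow_one, mul_assoc],
          ← pow_add]
        ring_nf
      rw [mul_assoc, this]
    calc a ^ (n+1) * b = a * (a ^ n * b) := by rw [pow_succ', mul_assoc]
      _ = a * (b * a ^ (3*n)) := by rw [ih]
      _ = (a * b) * a ^ (3*n) := by simp only [mul_assoc]
      _ = (b * (a * (a * a))) * a ^ (3*n) := by rw [h2]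
      _ = b * a ^ (3*(n+1)) := e2

/-- P1 : the spectral idempotent `a*x` commutes with `b`. -/
lemma spectral_comm (a b x : R) (h : IsDrazinInverse a x)
    (hw : ∀ m, a ^ m * b = b * a ^ (3*m)) : (a * x) * b = b * (a * x) := by
  obtain ⟨k, hk⟩ := h.2.2
  have half1 : (a * x) * b = ((a * x) * b) * (a * x) := by
    calc (a * x) * b = (x ^ (k+1) * a ^ (k+1)) * b := by rw [dpowe' h (k+1) (by omega)]
      _ = x ^ (k+1) * (a ^ (k+1) * b) := by simp only [mul_assoc]
      _ = x ^ (k+1) * (b * a ^ (3*(k+1))) := by rw [hw (k+1)]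
      _ = x ^ (k+1) * (b * (a ^ (3*(k+1)) * (a * x))) := by
            rw [dpow_e h hk (3*(k+1)) (by omega)]
      _ = (x ^ (k+1) * (b * a ^ (3*(k+1)))) * (a * x) := by simp only [mul_assoc]
      _ = (x ^ (k+1) * (a ^ (k+1) * b)) * (a * x) := by rw [← hw (k+1)]
      _ = ((x ^ (k+1) * a ^ (k+1)) * b) * (a * x) := by simp only [mul_assoc]
      _ = ((a * x) * b) * (a * x) := by rw [dpowe' h (k+1) (by omega)]
  have half2 : b * (a * x) = (a * x) * (b * (a * x)) := by
    calc b * (a * x) = b * (a ^ (3*(k+1)) * x ^ (3*(k+1))) := by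
          rw [dpowe h (3*(k+1)) (by omega)]
      _ = (b * a ^ (3*(k+1))) * x ^ (3*(k+1)) := by simp only [mul_assoc]
      _ = (a ^ (k+1) * b) * x ^ (3*(k+1)) := by rw [hw (k+1)]
      _ = (((a * x) * a ^ (k+1)) * b) * x ^ (3*(k+1)) := by
            rw [de_pow h hk (k+1) (by omega)]
      _ = (a * x) * ((a ^ (k+1) * b) * x ^ (3*(k+1))) := by simp only [mul_assoc]
      _ = (a * x) * ((b * a ^ (3*(k+1))) * x ^ (3*(k+1))) := by rw [hw (k+1)]
      _ = (a * x) * (b * (a ^ (3*(k+1)) * x ^ (3*(k+1)))) := by simp only [mul_assoc]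
      _ = (a * x) * (b * (a * x)) := by rw [dpowe h (3*(k+1)) (by omega)]
  calc (a * x) * b = ((a * x) * b) * (a * x) := half1
    _ = (a * x) * (b * (a * x)) := by simp only [mul_assoc]
    _ = b * (a * x) := half2.symm



lemma wordA {R : Type*} [Ring R] (a b : R) (h1 : a * (b * (b * b)) = b * a)
    (h2 : b * (a * (a * a)) = a * b) : a * (b) = a * (b * (b * (b * (b * (b))))) := by
  calc a * (b)
    _ = b * (a * (a * (a))) := by simpa only [mul_assoc] using h2.symm
    _ = a * (b * (b * (b * (a * (a))))) := by simpa only [mul_assoc] using congrArg (fun t => t * (a * (a))) h1.symm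
    _ = b * (a * (a * (a * (b * (b * (a * (a))))))) := by simpa only [mul_assoc] using congrArg (fun t => t * (b * (b * (a * (a))))) h2.symm
    _ = b * (a * (a * (b * (a * (a * (a * (b * (a * (a))))))))) := by simpa only [mul_assoc] using congrArg (fun t => (b * (a * (a))) * (t * (b * (a * (a))))) h2.symm
    _ = b * (a * (a * (a * (b * (b * (b * (a * (a * (b * (a * (a))))))))))) := by simpa only [mul_assoc] using congrArg (fun t => (b * (a * (a))) * (t * (a * (a * (b * (a * (a))))))) h1.symm
    _ = a * (b * (b * (b * (b * (a * (a * (b * (a * (a))))))))) := by simpa only [mul_assoc] using congrArg (fun t => t * (b * (b * (b * (a * (a * (b * (a * (a))))))))) h2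
    _ = a * (b * (b * (b * (b * (a * (a * (a * (b * (b * (b * (a))))))))))) := by simpa only [mul_assoc] using congrArg (fun t => (a * (b * (b * (b * (b * (a * (a))))))) * (t * (a))) h1.symm
    _ = a * (b * (b * (b * (a * (b * (b * (b * (b * (a))))))))) := by simpa only [mul_assoc] using congrArg (fun t => (a * (b * (b * (b)))) * (t * (b * (b * (b * (a)))))) h2
    _ = a * (b * (b * (b * (b * (a * (b * (a))))))) := by simpa only [mul_assoc] using congrArg (fun t => (a * (b * (b * (b)))) * (t * (b * (a)))) h1
    _ = a * (b * (b * (b * (b * (a * (a * (b * (b * (b))))))))) := by simpa only [mul_assoc] using congrArg (fun t => (a * (b * (b * (b * (b * (a)))))) * t) h1.symm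
    _ = b * (a * (a * (a * (b * (b * (b * (a * (a * (b * (b * (b))))))))))) := by simpa only [mul_assoc] using congrArg (fun t => t * (b * (b * (b * (a * (a * (b * (b * (b))))))))) h2.symm
    _ = b * (a * (a * (b * (a * (a * (a * (b * (b * (b))))))))) := by simpa only [mul_assoc] using congrArg (fun t => (b * (a * (a))) * (t * (a * (a * (b * (b * (b))))))) h1
    _ = b * (a * (a * (a * (b * (b * (b * (b))))))) := by simpa only [mul_assoc] using congrArg (fun t => (b * (a * (a))) * (t * (b * (b * (b))))) h2
    _ = a * (b * (b * (b * (b * (b))))) := by simpa only [mul_assoc] using congrArg (fun t => t * (b * (b * (b * (b))))) h2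

lemma wordB {R : Type*} [Ring R] (a b : R) (h1 : a * (b * (b * b)) = b * a)
    (h2 : b * (a * (a * a)) = a * b) : a * (a * (a * (a * (a * (b))))) = a * (b) := by
  calc a * (a * (a * (a * (a * (b)))))
    _ = a * (a * (a * (a * (b * (a * (a * (a))))))) := by simpa only [mul_assoc] using congrArg (fun t => (a * (a * (a * (a)))) * t) h2.symm
    _ = a * (a * (a * (b * (a * (a * (a * (a * (a * (a))))))))) := by simpa only [mul_assoc] using congrArg (fun t => (a * (a * (a))) * (t * (a * (a * (a))))) h2.symm
    _ = a * (a * (b * (a * (a * (a * (a * (a * (a * (a * (a * (a))))))))))) := by simpa only [mul_assoc] using congrArg (fun t => (a * (a)) * (t * (a * (a * (a * (a * (a * (a)))))))) h2.symm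
    _ = a * (a * (a * (b * (b * (b * (a * (a * (a * (a * (a * (a * (a * (a))))))))))))) := by simpa only [mul_assoc] using congrArg (fun t => (a * (a)) * (t * (a * (a * (a * (a * (a * (a * (a * (a)))))))))) h1.symm
    _ = a * (a * (a * (b * (b * (a * (b * (a * (a * (a * (a * (a))))))))))) := by simpa only [mul_assoc] using congrArg (fun t => (a * (a * (a * (b * (b))))) * (t * (a * (a * (a * (a * (a))))))) h2
    _ = a * (a * (a * (b * (b * (a * (a * (b * (a * (a))))))))) := by simpa only [mul_assoc] using congrArg (fun t => (a * (a * (a * (b * (b * (a)))))) * (t * (a * (a)))) h2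
    _ = a * (a * (a * (b * (b * (a * (a * (a * (b * (b * (b * (a))))))))))) := by simpa only [mul_assoc] using congrArg (fun t => (a * (a * (a * (b * (b * (a * (a))))))) * (t * (a))) h1.symm
    _ = a * (a * (a * (b * (a * (b * (b * (b * (b * (a))))))))) := by simpa only [mul_assoc] using congrArg (fun t => (a * (a * (a * (b)))) * (t * (b * (b * (b * (a)))))) h2
    _ = a * (a * (a * (b * (b * (a * (b * (a))))))) := by simpa only [mul_assoc] using congrArg (fun t => (a * (a * (a * (b)))) * (t * (b * (a)))) h1
    _ = a * (a * (a * (b * (b * (b * (a * (a * (a * (a))))))))) := by simpa only [mul_assoc] using congrArg (fun t => (a * (a * (a * (b * (b))))) * (t * (a))) h2.symm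
    _ = a * (a * (b * (a * (a * (a * (a * (a))))))) := by simpa only [mul_assoc] using congrArg (fun t => (a * (a)) * (t * (a * (a * (a * (a)))))) h1
    _ = a * (b * (a * (a * (a * (a * (a * (a * (a * (a))))))))) := by simpa only [mul_assoc] using congrArg (fun t => (a) * (t * (a * (a * (a * (a * (a))))))) h2.symm
    _ = b * (a * (a * (a * (a * (a * (a * (a * (a * (a * (a * (a))))))))))) := by simpa only [mul_assoc] using congrArg (fun t => t * (a * (a * (a * (a * (a * (a * (a * (a))))))))) h2.symm
    _ = a * (b * (b * (b * (a * (a * (a * (a * (a * (a * (a * (a * (a * (a))))))))))))) := by simpa only [mul_assoc] using congrArg (fun t => t * (a * (a * (a * (a * (a * (a * (a * (a * (a * (a))))))))))) h1.symm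
    _ = a * (b * (b * (a * (b * (a * (a * (a * (a * (a * (a * (a))))))))))) := by simpa only [mul_assoc] using congrArg (fun t => (a * (b * (b))) * (t * (a * (a * (a * (a * (a * (a * (a))))))))) h2
    _ = a * (b * (b * (a * (a * (b * (a * (a * (a * (a))))))))) := by simpa only [mul_assoc] using congrArg (fun t => (a * (b * (b * (a)))) * (t * (a * (a * (a * (a)))))) h2
    _ = a * (b * (b * (a * (a * (a * (b * (a))))))) := by simpa only [mul_assoc] using congrArg (fun t => (a * (b * (b * (a * (a))))) * (t * (a))) h2
    _ = a * (b * (a * (b * (b * (a))))) := by simpa only [mul_assoc] using congrArg (fun t => (a * (b)) * (t * (b * (a)))) h2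
    _ = b * (a * (a * (a * (a * (b * (b * (a))))))) := by simpa only [mul_assoc] using congrArg (fun t => t * (a * (b * (b * (a))))) h2.symm
    _ = a * (b * (b * (b * (a * (a * (a * (b * (b * (a))))))))) := by simpa only [mul_assoc] using congrArg (fun t => t * (a * (a * (a * (b * (b * (a))))))) h1.symm
    _ = a * (b * (b * (a * (b * (b * (b * (a))))))) := by simpa only [mul_assoc] using congrArg (fun t => (a * (b * (b))) * (t * (b * (b * (a))))) h2
    _ = a * (b * (b * (b * (a * (a))))) := by simpa only [mul_assoc] using congrArg (fun t => (a * (b * (b))) * (t * (a))) h1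
    _ = b * (a * (a * (a))) := by simpa only [mul_assoc] using congrArg (fun t => t * (a * (a))) h1
    _ = a * (b) := by simpa only [mul_assoc] using h2

lemma wordC {R : Type*} [Ring R] (a b : R) (h1 : a * (b * (b * b)) = b * a)
    (h2 : b * (a * (a * a)) = a * b) : a * (a * (a * (b * (b * (b))))) = b * (a * (a * (a * (a * (a * (a * (a))))))) := by
  calc a * (a * (a * (b * (b * (b)))))
    _ = a * (a * (b * (a))) := by simpa only [mul_assoc] using congrArg (fun t => (a * (a)) * t) h1
    _ = a * (b * (a * (a * (a * (a))))) := by simpa only [mul_assoc] using congrArg (fun t => (a) * (t * (a))) h2.symm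
    _ = b * (a * (a * (a * (a * (a * (a * (a))))))) := by simpa only [mul_assoc] using congrArg (fun t => t * (a * (a * (a * (a))))) h2.symm

lemma wordD {R : Type*} [Ring R] (a b : R) (h1 : a * (b * (b * b)) = b * a)
    (h2 : b * (a * (a * a)) = a * b) : b * (b * (b * (a))) = a * (b * (b * (b * (b * (b * (b * (b * (b * (b))))))))) := by
  calc b * (b * (b * (a)))
    _ = b * (b * (a * (b * (b * (b))))) := by simpa only [mul_assoc] using congrArg (fun t => (b * (b)) * t) h1.symm
    _ = b * (a * (b * (b * (b * (b * (b * (b))))))) := by simpa only [mul_assoc] using congrArg (fun t => (b) * (t * (b * (b * (b))))) h1.symm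
    _ = a * (b * (b * (b * (b * (b * (b * (b * (b * (b))))))))) := by simpa only [mul_assoc] using congrArg (fun t => t * (b * (b * (b * (b * (b * (b))))))) h1.symm



lemma W2iter (a b : R) (h1 : a * (b * (b * b)) = b * a)
    (h2 : b * (a * (a * a)) = a * b) : ∀ t, a * b ^ (4*t+1) = a * b := by
  have h5 : a * b ^ 5 = a * b := by
    simpa only [pow_succ, pow_zero, one_mul, mul_assoc] using (wordA a b h1 h2).symm
  intro t
  induction t with
  | zero => rw [pow_one]
  | succ n ih =>
    calc a * b ^ (4*(n+1)+1) = (a * b ^ (4*n+1)) * b ^ 4 := by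
          rw [show 4*(n+1)+1 = (4*n+1)+4 by ring, pow_add, mul_assoc]
      _ = (a * b) * b ^ 4 := by rw [ih]
      _ = a * b ^ 5 := by
          rw [show (5:ℕ) = 1+4 by norm_num, pow_add, pow_one, mul_assoc]
      _ = a * b := h5

lemma W3iter (a b : R) (h1 : a * (b * (b * b)) = b * a)
    (h2 : b * (a * (a * a)) = a * b) : ∀ t, a ^ (4*t+1) * b = a * b := by
  have h5 : a ^ 5 * b = a * b := by
    simpa only [pow_succ, pow_zero, one_mul, mul_assoc] using wordB a b h1 h2
  intro t
  induction t with
  | zero => rw [pow_one]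
  | succ n ih =>
    calc a ^ (4*(n+1)+1) * b = a ^ 4 * (a ^ (4*n+1) * b) := by
          rw [show 4*(n+1)+1 = 4+(4*n+1) by ring, pow_add, mul_assoc]
      _ = a ^ 4 * (a * b) := by rw [ih]
      _ = a ^ 5 * b := by
          rw [show (5:ℕ) = 4+1 by norm_num, pow_add, pow_one, mul_assoc]
      _ = a * b := h5

/-- key3 : `a^3 * ((a*aD) * (b*bD)) = aD * (b*bD)`. -/
lemma key3 (a b aD bD : R) (hDa : IsDrazinInverse a aD) (hDb : IsDrazinInverse b bD)
    (h1 : a * (b * (b * b)) = b * a) (h2 : b * (a * (a * a)) = a * b) :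
    a ^ 3 * ((a * aD) * (b * bD)) = aD * (b * bD) := by
  obtain ⟨ka, hka⟩ := hDa.2.2
  have W3i := W3iter a b h1 h2
  have hW1b : ∀ m, b ^ m * a = a * b ^ (3*m) := powW1 b a h1
  have hP1' : (b * bD) * a = a * (b * bD) := spectral_comm b a bD hDb hW1b
  have hfaD : Commute (b * bD) aD := dcommutant hDa (b * bD) hP1'
  have afpow : ∀ t, a ^ (4*t+1) * (b * bD) = a * (b * bD) := by
    intro t
    calc a ^ (4*t+1) * (b * bD) = (a ^ (4*t+1) * b) * bD := by simp only [mul_assoc]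
      _ = (a * b) * bD := by rw [W3i t]
      _ = a * (b * bD) := by simp only [mul_assoc]
  have haDa : ∀ j, 1 ≤ j → aD ^ (j+1) * a = aD ^ j := by
    intro j hj
    rw [((dcomm hDa).symm.pow_left (j+1)).eq]
    exact daxx hDa j hj
  have adf : ∀ s, aD ^ (4*s+1) * (b * bD) = aD * (b * bD) := by
    intro s
    have : aD * (b * bD) = aD ^ (4*s+1) * (b * bD) := by
      calc aD * (b * bD) = (aD ^ (4*s+1+1) * a ^ (4*s+1)) * (b * bD) := by
            rw [dxxa hDa (4*s+1)]
        _ = aD ^ (4*s+1+1) * (a ^ (4*s+1) * (b * bD)) := by simp only [mul_assoc]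
        _ = aD ^ (4*s+1+1) * (a * (b * bD)) := by rw [afpow s]
        _ = (aD ^ (4*s+1+1) * a) * (b * bD) := by simp only [mul_assoc]
        _ = aD ^ (4*s+1) * (b * bD) := by rw [haDa (4*s+1) (by omega)]
    exact this.symm
  calc a ^ 3 * ((a * aD) * (b * bD))
      = a ^ 3 * ((a ^ (4*ka+2) * aD ^ (4*ka+2)) * (b * bD)) := by
        rw [dpowe hDa (4*ka+2) (by omega)]
    _ = (a ^ 3 * a ^ (4*ka+2)) * (aD ^ (4*ka+2) * (b * bD)) := by simp only [mul_assoc]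
    _ = a ^ (4*(ka+1)+1) * (aD ^ (4*ka+2) * (b * bD)) := by
        rw [← pow_add, show 3+(4*ka+2) = 4*(ka+1)+1 by ring]
    _ = a ^ (4*(ka+1)+1) * ((b * bD) * aD ^ (4*ka+2)) := by
        rw [(hfaD.pow_right (4*ka+2)).eq]
    _ = (a ^ (4*(ka+1)+1) * (b * bD)) * aD ^ (4*ka+2) := by simp only [mul_assoc]
    _ = (a * (b * bD)) * aD ^ (4*ka+2) := by rw [afpow (ka+1)]
    _ = a * ((b * bD) * aD ^ (4*ka+2)) := by simp only [mul_assoc]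
    _ = a * (aD ^ (4*ka+2) * (b * bD)) := by rw [(hfaD.pow_right (4*ka+2)).eq]
    _ = (a * aD ^ (4*ka+1+1)) * (b * bD) := by simp only [mul_assoc]
    _ = aD ^ (4*ka+1) * (b * bD) := by rw [daxx hDa (4*ka+1) (by omega)]
    _ = aD * (b * bD) := adf ka

/-- Main lemma. -/
lemma mainLem (a b aD bD : R) (hDa : IsDrazinInverse a aD) (hDb : IsDrazinInverse b bD)
    (h1 : a * b ^ 3 = b * a) (h2 : b * a ^ 3 = a * b) : aD * bD = b ^ 3 * a := by
  have h1' : a * (b * (b * b)) = b * a := by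
    simpa only [pow_succ, pow_zero, one_mul, mul_assoc] using h1
  have h2' : b * (a * (a * a)) = a * b := by
    simpa only [pow_succ, pow_zero, one_mul, mul_assoc] using h2
  obtain ⟨ka, hka⟩ := hDa.2.2
  obtain ⟨kb, hkb⟩ := hDb.2.2
  have W2i := W2iter a b h1' h2'
  have W3i := W3iter a b h1' h2'
  have hW1a : ∀ m, a ^ m * b = b * a ^ (3*m) := powW1 a b h2'
  have hP1 : (a * aD) * b = b * (a * aD) := spectral_comm a b aD hDa hW1a
  have hebD : (a * aD) * bD = bD * (a * aD) := dcommutant hDb (a * aD) hP1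
  have key3ab := key3 a b aD bD hDa hDb h1' h2'
  have key3ba := key3 b a bD aD hDb hDa h2' h1'
  have hfbD : (b * bD) * bD = bD := by
    calc (b * bD) * bD = (bD * b) * bD := by rw [hDb.2.1]
      _ = bD := hDb.1
  have afpow : ∀ t, a ^ (4*t+1) * (b * bD) = a * (b * bD) := by
    intro t
    calc a ^ (4*t+1) * (b * bD) = (a ^ (4*t+1) * b) * bD := by simp only [mul_assoc]
      _ = (a * b) * bD := by rw [W3i t]
      _ = a * (b * bD) := by simp only [mul_assoc]
  have a7f : a ^ 7 * (b * bD) = a ^ 3 * (b * bD) := by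
    calc a ^ 7 * (b * bD) = a ^ 2 * (a ^ (4*1+1) * (b * bD)) := by
          rw [show (7:ℕ) = 2+(4*1+1) by norm_num, pow_add, mul_assoc]
      _ = a ^ 2 * (a * (b * bD)) := by rw [afpow 1]
      _ = (a ^ 2 * a) * (b * bD) := by simp only [mul_assoc]
      _ = a ^ 3 * (b * bD) := by rw [← pow_succ]
  have habf : (a * b) * (b * bD) = a * b := by
    have hb2 : a * b ^ (4*kb+2) = a * b ^ 2 := by
      calc a * b ^ (4*kb+2) = (a * b ^ (4*kb+1)) * b := by
            rw [show 4*kb+2 = (4*kb+1)+1 by ring, pow_succ, mul_assoc]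
        _ = (a * b) * b := by rw [W2i kb]
        _ = a * b ^ 2 := by rw [mul_assoc, ← pow_two]
    calc (a * b) * (b * bD) = (a * b ^ 2) * bD := by rw [pow_two]; simp only [mul_assoc]
      _ = (a * b ^ (4*kb+2)) * bD := by rw [hb2]
      _ = a * (b ^ (4*kb+1+1) * bD) := by
          rw [show 4*kb+2 = 4*kb+1+1 by ring, mul_assoc]
      _ = a * b ^ (4*kb+1) := by rw [dshift hDb hkb (4*kb+1) (by omega)]
      _ = a * b := W2i kb
  have habe : (a * b) * (a * aD) = a * b := by
    have hx : Commute a (a * aD) := (Commute.refl a).mul_right (dcomm hDa)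
    calc (a * b) * (a * aD) = a * (b * (a * aD)) := by simp only [mul_assoc]
      _ = a * ((a * aD) * b) := by rw [← hP1]
      _ = (a * (a * aD)) * b := by simp only [mul_assoc]
      _ = ((a * aD) * a) * b := by rw [hx.eq]
      _ = (a * aD) * (a * b) := by simp only [mul_assoc]
      _ = (a * aD) * (a ^ (4*ka+1) * b) := by rw [← W3i ka]
      _ = ((a * aD) * a ^ (4*ka+1)) * b := by simp only [mul_assoc]
      _ = a ^ (4*ka+1) * b := by rw [de_pow hDa hka (4*ka+1) (by omega)]
      _ = a * b := W3i ka
  have hba : a * b = b ^ 3 * a := by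
    have hw9 : b ^ 3 * a = a * b ^ 9 := by
      simpa only [pow_succ, pow_zero, one_mul, mul_assoc] using wordD a b h1' h2'
    calc a * b = a * b ^ (4*2+1) := (W2i 2).symm
      _ = a * b ^ 9 := by norm_num
      _ = b ^ 3 * a := hw9.symm
  have wC : a ^ 3 * b ^ 3 = b * a ^ 7 := by
    simpa only [pow_succ, pow_zero, one_mul, mul_assoc] using wordC a b h1' h2'
  calc aD * bD = aD * ((b * bD) * bD) := by rw [hfbD]
    _ = (aD * (b * bD)) * bD := by simp only [mul_assoc]
    _ = (a ^ 3 * ((a * aD) * (b * bD))) * bD := by rw [key3ab]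
    _ = a ^ 3 * ((a * aD) * ((b * bD) * bD)) := by simp only [mul_assoc]
    _ = a ^ 3 * ((a * aD) * bD) := by rw [hfbD]
    _ = a ^ 3 * (bD * (a * aD)) := by rw [hebD]
    _ = a ^ 3 * ((b ^ 3 * ((b * bD) * (a * aD)))) := by rw [key3ba]
    _ = (a ^ 3 * b ^ 3) * ((b * bD) * (a * aD)) := by simp only [mul_assoc]
    _ = (b * a ^ 7) * ((b * bD) * (a * aD)) := by rw [wC]
    _ = b * ((a ^ 7 * (b * bD)) * (a * aD)) := by simp only [mul_assoc]
    _ = b * ((a ^ 3 * (b * bD)) * (a * aD)) := by rw [a7f]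
    _ = (b * a ^ 3) * ((b * bD) * (a * aD)) := by simp only [mul_assoc]
    _ = (a * b) * ((b * bD) * (a * aD)) := by rw [h2]
    _ = ((a * b) * (b * bD)) * (a * aD) := by simp only [mul_assoc]
    _ = (a * b) * (a * aD) := by rw [habf]
    _ = a * b := habe
    _ = b ^ 3 * a := hba

end SolAux


theorem stmt16 {R : Type*} [Ring R] (a aD b bD : R)
    (haD : IsDrazinInverse a aD) (hbD : IsDrazinInverse b bD)
    (h1 : a * b ^ 3 = b * a) (h2 : b * a ^ 3 = a * b) :
    aD * bD = b ^ 3 * a ∧ bD * aD = a ^ 3 * b := by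
  exact ⟨SolAux.mainLem a b aD bD haD hbD h1 h2, SolAux.mainLem b a bD aD hbD haD h2 h1⟩
end

section
/- If a, b are Drazin invertible in a ring with a³b = ba and b³a = ab, then a^D·b^D = (b^D)³·a^D = b^D·a^D·a² = b²·b^D·a^D, and b^D·a^D = (a^D)³·b^D = a^D·b^D·b² = a²·a^D·b^D. -/
section DrazinAux

variable {R : Type*} [Ring R]

private lemma tl {u v : R} (h : u = v) (t : R) : u * t = v * t := by rw [h]

private lemma powc {x X : R} (hc : x * X = X * x) : ∀ n : ℕ, x ^ n * X = X * x ^ n := by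
  intro n
  induction n with
  | zero => simp
  | succ n ih => rw [pow_succ, mul_assoc, hc, ← mul_assoc, ih, mul_assoc]

private lemma powstep {x X : R} (k : ℕ) (hk : x ^ (k + 1) * X = x ^ k) :
    ∀ j : ℕ, x ^ (k + j + 1) * X = x ^ (k + j) := by
  intro j
  induction j with
  | zero => simpa using hk
  | succ n ih =>
    have e : k + (n + 1) + 1 = (k + n + 1) + 1 := rfl
    rw [e, pow_succ' x (k + n + 1), mul_assoc, ih, ← pow_succ']
    congr 1

private lemma Xleft {x X : R} (hXxX : X * x * X = X) (hc : x * X = X * x) :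
    ∀ n : ℕ, X ^ (n + 1) * x ^ n = X := by
  intro n
  induction n with
  | zero => simp
  | succ n ih =>
    calc X ^ (n + 1 + 1) * x ^ (n + 1)
        = X * X ^ (n + 1) * (x ^ n * x) := by rw [pow_succ' X (n+1), pow_succ x n]
      _ = X * (X ^ (n + 1) * x ^ n) * x := by
          rw [mul_assoc X, ← mul_assoc (X ^ (n+1)), ← mul_assoc]
      _ = X * X * x := by rw [ih]
      _ = X * (x * X) := by rw [mul_assoc, ← hc]
      _ = X := by rw [← mul_assoc, hXxX]

private lemma Xright {x X : R} (hXxX : X * x * X = X) (hc : x * X = X * x) :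
    ∀ n : ℕ, x ^ n * X ^ (n + 1) = X := by
  intro n
  induction n with
  | zero => simp
  | succ n ih =>
    calc x ^ (n + 1) * X ^ (n + 1 + 1)
        = x * x ^ n * (X ^ (n + 1) * X) := by rw [pow_succ' x n, pow_succ X (n+1)]
      _ = x * (x ^ n * X ^ (n + 1)) * X := by
          rw [mul_assoc x, ← mul_assoc (x ^ n), ← mul_assoc]
      _ = x * X * X := by rw [ih]
      _ = X * x * X := by rw [hc]
      _ = X := hXxX

/-- Double-commutant property of the Drazin inverse. -/
private lemma lemDC {x X : R} (hXxX : X * x * X = X) (hc : x * X = X * x)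
    (k : ℕ) (hk : x ^ (k + 1) * X = x ^ k) (c : R) (h : c * x = x * c) :
    c * X = X * c := by
  have hcp : ∀ n : ℕ, c * x ^ n = x ^ n * c := by
    intro n
    induction n with
    | zero => simp
    | succ n ih => rw [pow_succ, ← mul_assoc, ih, mul_assoc, h, ← mul_assoc]
  have hfabs : x * X * x ^ (k + 1) = x ^ (k + 1) := by
    rw [mul_assoc, ← powc hc (k+1), ← mul_assoc, ← pow_succ']
    exact powstep k hk 1
  have hfabs2 : x ^ (k + 1) * (x * X) = x ^ (k + 1) := by
    rw [← mul_assoc, ← pow_succ]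
    exact powstep k hk 1
  have hfp : x ^ (k + 1) * X ^ (k + 1) = x * X := by
    have h0 : x ^ k * X ^ (k + 1) = X := Xright hXxX hc k
    calc x ^ (k+1) * X ^ (k+1) = x * x ^ k * X ^ (k+1) := by rw [pow_succ' x k]
      _ = x * (x ^ k * X ^ (k+1)) := by rw [mul_assoc]
      _ = x * X := by rw [h0]
  have hfp2 : X ^ (k + 1) * x ^ (k + 1) = x * X := by
    have h0 : X ^ (k + 1) * x ^ k = X := Xleft hXxX hc k
    calc X ^ (k+1) * x ^ (k+1) = X ^ (k+1) * x ^ k * x := by rw [pow_succ x k, ← mul_assoc]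
      _ = X * x := by rw [h0]
      _ = x * X := hc.symm
  have s1 : x * X * (c * (x * X)) = c * (x * X) := by
    have key : c * (x * X) = x ^ (k+1) * (c * X ^ (k+1)) := by
      rw [← hfp, ← mul_assoc, hcp, mul_assoc]
    rw [key, ← mul_assoc, hfabs]
  have s2 : x * X * c * (x * X) = x * X * c := by
    have key : x * X * c = X ^ (k+1) * (c * x ^ (k+1)) := by
      rw [← hfp2, mul_assoc, ← hcp]
    rw [key, mul_assoc, mul_assoc, hfabs2]
  have hcf : c * (x * X) = x * X * c := by rw [← s1, ← mul_assoc, s2]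
  have hXf : X * (x * X) = X := by rw [← mul_assoc, hXxX]
  have hfX : x * X * X = X := by rw [hc, hXxX]
  have final : X * c = x * X * (c * X) := by
    calc X * c = X * (x * X) * c := by rw [hXf]
      _ = X * (x * X * c) := by rw [mul_assoc]
      _ = X * (c * (x * X)) := by rw [← hcf]
      _ = X * (c * x * X) := by rw [← mul_assoc c]
      _ = X * (x * c * X) := by rw [h]
      _ = X * (x * (c * X)) := by rw [mul_assoc x]
      _ = X * x * (c * X) := by rw [← mul_assoc]
      _ = x * X * (c * X) := by rw [← hc]
  have final2 : c * X = x * X * (c * X) := by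
    calc c * X = c * (x * X * X) := by rw [hfX]
      _ = c * (x * X) * X := by rw [← mul_assoc]
      _ = x * X * c * X := by rw [hcf]
      _ = x * X * (c * X) := by rw [mul_assoc]
  rw [final2, ← final]

/-- Commuting lemma: if `x³c = cx` then `c x⁻ᴰ = (x⁻ᴰ)³ c`. -/
private lemma lemL {x X : R} (hXxX : X * x * X = X) (hc : x * X = X * x)
    (k : ℕ) (hk : x ^ (k + 1) * X = x ^ k) (c : R) (h : x * (x * (x * c)) = c * x) :
    c * X = X * (X * (X * c)) := by
  have hT : ∀ t : R, x * (x * (x * (c * t))) = c * (x * t) := fun t => by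
    simpa only [mul_assoc] using tl h t
  have h' : x ^ 3 * c = c * x := by
    rw [pow_succ, pow_succ, pow_one, mul_assoc, mul_assoc]; exact h
  have hi : ∀ n : ℕ, x ^ (3 * n) * c = c * x ^ n := by
    intro n
    induction n with
    | zero => simp
    | succ n ih =>
      have e1 : 3 * (n + 1) = 3 + 3 * n := by ring
      calc x ^ (3 * (n + 1)) * c = x ^ 3 * x ^ (3 * n) * c := by rw [e1, pow_add]
        _ = x ^ 3 * (x ^ (3 * n) * c) := by rw [mul_assoc]
        _ = x ^ 3 * (c * x ^ n) := by rw [ih]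
        _ = x ^ 3 * c * x ^ n := by rw [← mul_assoc]
        _ = c * x * x ^ n := by rw [h']
        _ = c * x ^ (n + 1) := by rw [mul_assoc, ← pow_succ']
  have A1 : ∀ t : R, x ^ (3 * k) * (c * t) = c * (x ^ k * t) := fun t => by
    simpa only [mul_assoc] using tl (hi k) t
  have A1c : x ^ (3 * k) * c = c * x ^ k := hi k
  have hXl := Xleft hXxX hc (3 * k)
  have hXlT : ∀ t : R, X ^ (3 * k + 1) * (x ^ (3 * k) * t) = X * t := fun t => by
    simpa only [mul_assoc] using tl hXl t
  have A2 : ∀ t : R, X ^ (3 * k + 3) * (x ^ (3 * k) * t) = X * (X * (X * t)) := by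
    intro t
    have e2 : 3 * k + 3 = (3 * k + 1) + 2 := by omega
    rw [e2, pow_add]
    calc X ^ (3*k+1) * X ^ 2 * (x ^ (3*k) * t)
        = X ^ 2 * X ^ (3*k+1) * (x ^ (3*k) * t) := by rw [pow_mul_comm]
      _ = X ^ 2 * (X ^ (3*k+1) * (x ^ (3*k) * t)) := by rw [mul_assoc]
      _ = X ^ 2 * (X * t) := by rw [hXlT]
      _ = X * (X * (X * t)) := by rw [pow_two, mul_assoc]
  have A3 : x ^ k * (x * X) = x ^ k := by
    rw [← mul_assoc, ← pow_succ]; exact hk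
  have A4 : x ^ (3 * k) * (x * X) = x ^ (3 * k) := by
    rw [← mul_assoc, ← pow_succ]
    have h4 := powstep k hk (2 * k)
    have e : k + 2 * k = 3 * k := by omega
    rwa [e] at h4
  have A4T : ∀ t, x ^ (3 * k) * (x * (X * t)) = x ^ (3 * k) * t := fun t => by
    simpa only [mul_assoc] using tl A4 t
  have A5 : x ^ k * X ^ (k + 1) = X := Xright hXxX hc k
  have hXl2 : X ^ (2 + 1) * x ^ 2 = X := Xleft hXxX hc 2
  have hXl2' : X * (X * (X * (x * x))) = X := by
    simpa only [pow_succ, pow_zero, one_mul, mul_assoc] using hXl2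
  have A9 : ∀ t, X * (X * (X * (x * (x * (x * t))))) = x * (X * t) := by
    intro t
    have h1 : X * (X * (X * (x * (x * (x * t))))) = (X * (X * (X * (x * x)))) * (x * t) := by
      simp only [mul_assoc]
    rw [h1, hXl2', ← mul_assoc, ← hc, mul_assoc]
  have hwX : ∀ t, X * (x ^ (3 * k) * t) = x ^ (3 * k) * (X * t) := fun t => by
    simpa only [mul_assoc] using tl (powc hc (3 * k)).symm t
  have hxw : x * x ^ (3 * k) = x ^ (3 * k) * x := by rw [← pow_succ', pow_succ]
  have hxwT : ∀ t, x * (x ^ (3 * k) * t) = x ^ (3 * k) * (x * t) := fun t => by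
    simpa only [mul_assoc] using tl hxw t
  have step1 : X * (X * (X * (c * (x * X)))) = X * (X * (X * c)) := by
    calc X * (X * (X * (c * (x * X))))
        = X ^ (3*k+3) * (x ^ (3*k) * (c * (x * X))) := (A2 _).symm
      _ = X ^ (3*k+3) * (c * (x ^ k * (x * X))) := by rw [A1]
      _ = X ^ (3*k+3) * (c * x ^ k) := by rw [A3]
      _ = X ^ (3*k+3) * (x ^ (3*k) * c) := by rw [← A1c]
      _ = X * (X * (X * c)) := A2 _
  have key : c * X = x ^ (3*k) * (c * X ^ (k+1)) := by
    conv_lhs => rw [← A5]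
    rw [← mul_assoc, ← A1c, mul_assoc]
  have step2 : x * (X * (c * X)) = c * X := by
    calc x * (X * (c * X))
        = x * (X * (x ^ (3*k) * (c * X ^ (k+1)))) := by rw [key]
      _ = x * (x ^ (3*k) * (X * (c * X ^ (k+1)))) := by rw [hwX]
      _ = x ^ (3*k) * (x * (X * (c * X ^ (k+1)))) := by rw [hxwT]
      _ = x ^ (3*k) * (c * X ^ (k+1)) := by rw [A4T]
      _ = c * (x ^ k * X ^ (k+1)) := by rw [A1]
      _ = c * X := by rw [A5]
  have main : X * (X * (X * c)) = c * X := by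
    calc X * (X * (X * c))
        = X * (X * (X * (c * (x * X)))) := by rw [step1]
      _ = X * (X * (X * (x * (x * (x * (c * X)))))) := by rw [← hT]
      _ = x * (X * (c * X)) := A9 _
      _ = c * X := step2
  exact main.symm

end DrazinAux


theorem stmt17 {R : Type*} [Ring R] (a aD b bD : R)
    (haD : IsDrazinInverse a aD) (hbD : IsDrazinInverse b bD)
    (h1 : a ^ 3 * b = b * a) (h2 : b ^ 3 * a = a * b) :
    (aD * bD = bD ^ 3 * aD ∧ aD * bD = bD * aD * a ^ 2 ∧ aD * bD = b ^ 2 * bD * aD) ∧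
    (bD * aD = aD ^ 3 * bD ∧ bD * aD = aD * bD * b ^ 2 ∧ bD * aD = a ^ 2 * aD * bD) := by
  obtain ⟨ha1, ha2, ka, hka⟩ := haD
  obtain ⟨hb1, hb2, kb, hkb⟩ := hbD
  have h1c : a * (a * (a * b)) = b * a := by
    simpa only [pow_succ, pow_zero, one_mul, mul_assoc] using h1
  have h2c : b * (b * (b * a)) = a * b := by
    simpa only [pow_succ, pow_zero, one_mul, mul_assoc] using h2
  have waA : a * aD = aD * a := ha2
  have wAaA : aD * (a * aD) = aD := by simpa only [mul_assoc] using ha1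
  have wbB : b * bD = bD * b := hb2
  have wBbB : bD * (b * bD) = bD := by simpa only [mul_assoc] using hb1
  have L1 : b * aD = aD * (aD * (aD * b)) := lemL ha1 ha2 ka hka b h1c
  have L2 : a * bD = bD * (bD * (bD * a)) := lemL hb1 hb2 kb hkb a h2c
  have h1cT : ∀ t : R, a * (a * (a * (b * t))) = b * (a * t) := fun t => by
    simpa only [mul_assoc] using tl h1c t
  have h2cT : ∀ t : R, b * (b * (b * (a * t))) = a * (b * t) := fun t => by
    simpa only [mul_assoc] using tl h2c t
  have waAT : ∀ t : R, a * (aD * t) = aD * (a * t) := fun t => by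
    simpa only [mul_assoc] using tl waA t
  have wAaAT : ∀ t : R, aD * (a * (aD * t)) = aD * t := fun t => by
    simpa only [mul_assoc] using tl wAaA t
  have wbBT : ∀ t : R, b * (bD * t) = bD * (b * t) := fun t => by
    simpa only [mul_assoc] using tl wbB t
  have wBbBT : ∀ t : R, bD * (b * (bD * t)) = bD * t := fun t => by
    simpa only [mul_assoc] using tl wBbB t
  have L1T : ∀ t : R, b * (aD * t) = aD * (aD * (aD * (b * t))) := fun t => by
    simpa only [mul_assoc] using tl L1 t
  have L2T : ∀ t : R, a * (bD * t) = bD * (bD * (bD * (a * t))) := fun t => by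
    simpa only [mul_assoc] using tl L2 t

  have K1 : a * (a * b) = b * (a * a) := by
    calc a * (a * b)
      _ = a * (b * (b * (b * a))) := by conv_lhs => rhs; rw [← h2c]
      _ = b * (b * (b * (a * (b * (b * a))))) := by conv_lhs => rw [← h2cT]
      _ = b * (b * (a * (a * (a * (b * (b * (b * a))))))) := by conv_lhs => rhs; rhs; rw [← h1cT]
      _ = b * (a * (a * (a * (b * (a * (a * (b * (b * (b * a))))))))) := by conv_lhs => rhs; rw [← h1cT]
      _ = a * (a * (a * (b * (a * (a * (b * (a * (a * (b * (b * (b * a))))))))))) := by conv_lhs => rw [← h1cT]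
      _ = a * (a * (a * (b * (a * (a * (b * (a * (a * (a * b))))))))) := by conv_lhs => rhs; rhs; rhs; rhs; rhs; rhs; rhs; rhs; rhs; rw [h2c]
      _ = a * (a * (b * (b * (b * (a * (a * (a * (b * (a * (a * (a * b))))))))))) := by conv_lhs => rhs; rhs; rw [← h2cT]
      _ = a * (a * (b * (b * (b * (b * (a * (a * (a * (a * b))))))))) := by conv_lhs => rhs; rhs; rhs; rhs; rhs; rw [h1cT]
      _ = a * (a * (b * (a * (b * (a * (a * (a * b))))))) := by conv_lhs => rhs; rhs; rhs; rw [h2cT]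
      _ = a * (a * (b * (a * (b * (b * a))))) := by conv_lhs => rhs; rhs; rhs; rhs; rhs; rw [h1c]
      _ = a * (a * (a * (a * (a * (b * (b * (b * a))))))) := by conv_lhs => rhs; rhs; rw [← h1cT]
      _ = a * (a * (a * (a * (a * (a * b))))) := by conv_lhs => rhs; rhs; rhs; rhs; rhs; rw [h2c]
      _ = a * (a * (a * (b * a))) := by conv_lhs => rhs; rhs; rhs; rw [h1c]
      _ = b * (a * a) := by conv_lhs => rw [h1cT]
  have K1T : ∀ t : R, a * (a * (b * t)) = b * (a * (a * t)) := fun t => by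
    simpa only [mul_assoc] using tl K1 t
  have K2 : a * (b * b) = b * (b * a) := by
    calc a * (b * b)
      _ = b * (b * (b * (a * b))) := by conv_lhs => rw [← h2cT]
      _ = b * (b * (b * (b * (b * (b * a))))) := by conv_lhs => rhs; rhs; rhs; rw [← h2c]
      _ = b * (b * (b * (b * (b * (a * (a * (a * b))))))) := by conv_lhs => rhs; rhs; rhs; rhs; rhs; rw [← h1c]
      _ = b * (b * (a * (b * (a * (a * b))))) := by conv_lhs => rhs; rhs; rw [h2cT]
      _ = b * (a * (a * (a * (b * (b * (a * (a * b))))))) := by conv_lhs => rhs; rw [← h1cT]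
      _ = a * (a * (a * (b * (a * (a * (b * (b * (a * (a * b))))))))) := by conv_lhs => rw [← h1cT]
      _ = a * (a * (b * (b * (b * (a * (a * (a * (b * (b * (a * (a * b))))))))))) := by conv_lhs => rhs; rhs; rw [← h2cT]
      _ = a * (a * (b * (b * (b * (b * (a * (b * (a * (a * b))))))))) := by conv_lhs => rhs; rhs; rhs; rhs; rhs; rw [h1cT]
      _ = a * (a * (b * (a * (b * (b * (a * (a * b))))))) := by conv_lhs => rhs; rhs; rhs; rw [h2cT]
      _ = a * (a * (a * (a * (a * (b * (b * (b * (a * (a * b))))))))) := by conv_lhs => rhs; rhs; rw [← h1cT]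
      _ = a * (a * (a * (a * (a * (a * (b * (a * b))))))) := by conv_lhs => rhs; rhs; rhs; rhs; rhs; rw [h2cT]
      _ = a * (a * (a * (b * (a * (a * b))))) := by conv_lhs => rhs; rhs; rhs; rw [h1cT]
      _ = b * (a * (a * (a * b))) := by conv_lhs => rw [h1cT]
      _ = b * (b * a) := by conv_lhs => rhs; rw [h1c]
  have K2T : ∀ t : R, a * (b * (b * t)) = b * (b * (a * t)) := fun t => by
    simpa only [mul_assoc] using tl K2 t
  have K3 : b * (a * (a * a)) = a * b := by
    calc b * (a * (a * a))
      _ = a * (a * (b * a)) := by conv_lhs => rw [← K1T]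
      _ = a * (b * (b * (b * (a * a)))) := by conv_lhs => rhs; rw [← h2cT]
      _ = b * (b * (a * (b * (a * a)))) := by conv_lhs => rw [K2T]
      _ = b * (b * (a * (a * (a * b)))) := by conv_lhs => rhs; rhs; rhs; rw [← K1]
      _ = b * (b * (b * a)) := by conv_lhs => rhs; rhs; rw [h1c]
      _ = a * b := by conv_lhs => rw [h2c]
  have K3T : ∀ t : R, b * (a * (a * (a * t))) = a * (b * t) := fun t => by
    simpa only [mul_assoc] using tl K3 t
  have K4 : a * (b * (b * b)) = b * a := by
    calc a * (b * (b * b))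
      _ = b * (b * (a * b)) := by conv_lhs => rw [K2T]
      _ = b * (b * (b * (a * (a * a)))) := by conv_lhs => rhs; rhs; rw [← K3]
      _ = a * (b * (a * a)) := by conv_lhs => rw [h2cT]
      _ = a * (a * (a * b)) := by conv_lhs => rhs; rw [← K1]
      _ = b * a := by conv_lhs => rw [h1c]
  have K4T : ∀ t : R, a * (b * (b * (b * t))) = b * (a * t) := fun t => by
    simpa only [mul_assoc] using tl K4 t
  have U1 : a * (a * (a * (a * (a * b)))) = a * b := by
    calc a * (a * (a * (a * (a * b))))
      _ = a * (a * (b * a)) := by conv_lhs => rhs; rhs; rw [h1c]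
      _ = b * (a * (a * a)) := by conv_lhs => rw [K1T]
      _ = a * b := by conv_lhs => rw [K3]
  have U1T : ∀ t : R, a * (a * (a * (a * (a * (b * t))))) = a * (b * t) := fun t => by
    simpa only [mul_assoc] using tl U1 t
  have U2 : b * (b * (b * (b * (b * a)))) = b * a := by
    calc b * (b * (b * (b * (b * a))))
      _ = b * (b * (a * b)) := by conv_lhs => rhs; rhs; rw [h2c]
      _ = a * (b * (b * b)) := by conv_lhs => rw [← K2T]
      _ = b * a := by conv_lhs => rw [K4]
  have U2T : ∀ t : R, b * (b * (b * (b * (b * (a * t))))) = b * (a * t) := fun t => by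
    simpa only [mul_assoc] using tl U2 t
  have C1 : b * (a * aD) = a * (aD * b) := by
    calc b * (a * aD)
      _ = a * (a * (a * (b * aD))) := by conv_lhs => rw [← h1cT]
      _ = a * (a * (a * (aD * (aD * (aD * b))))) := by conv_lhs => rhs; rhs; rhs; rw [L1]
      _ = a * (a * (aD * (a * (aD * (aD * b))))) := by conv_lhs => rhs; rhs; rw [waAT]
      _ = a * (a * (aD * (aD * b))) := by conv_lhs => rhs; rhs; rw [wAaAT]
      _ = a * (aD * (a * (aD * b))) := by conv_lhs => rhs; rw [waAT]
      _ = a * (aD * b) := by conv_lhs => rhs; rw [wAaAT]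
  have C1T : ∀ t : R, b * (a * (aD * t)) = a * (aD * (b * t)) := fun t => by
    simpa only [mul_assoc] using tl C1 t
  have C2 : a * (b * bD) = b * (bD * a) := by
    calc a * (b * bD)
      _ = b * (b * (b * (a * bD))) := by conv_lhs => rw [← h2cT]
      _ = b * (b * (b * (bD * (bD * (bD * a))))) := by conv_lhs => rhs; rhs; rhs; rw [L2]
      _ = b * (b * (bD * (b * (bD * (bD * a))))) := by conv_lhs => rhs; rhs; rw [wbBT]
      _ = b * (b * (bD * (bD * a))) := by conv_lhs => rhs; rhs; rw [wBbBT]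
      _ = b * (bD * (b * (bD * a))) := by conv_lhs => rhs; rw [wbBT]
      _ = b * (bD * a) := by conv_lhs => rhs; rw [wBbBT]
  have C2T : ∀ t : R, a * (b * (bD * t)) = b * (bD * (a * t)) := fun t => by
    simpa only [mul_assoc] using tl C2 t
  have M2 : a * (a * bD) = bD * (a * a) := by
    have hyp : a * a * b = b * (a * a) := by simpa only [mul_assoc] using K1
    have h0 := lemDC hb1 hb2 kb hkb (a * a) hyp
    simpa only [mul_assoc] using h0
  have M2T : ∀ t : R, a * (a * (bD * t)) = bD * (a * (a * t)) := fun t => by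
    simpa only [mul_assoc] using tl M2 t
  have M1 : b * (b * aD) = aD * (b * b) := by
    have hyp : b * b * a = a * (b * b) := by simpa only [mul_assoc] using K2.symm
    have h0 := lemDC ha1 ha2 ka hka (b * b) hyp
    simpa only [mul_assoc] using h0
  have M1T : ∀ t : R, b * (b * (aD * t)) = aD * (b * (b * t)) := fun t => by
    simpa only [mul_assoc] using tl M1 t
  have eB : a * (aD * bD) = bD * (a * aD) := by
    have hyp : a * aD * b = b * (a * aD) := by simpa only [mul_assoc] using C1.symm
    have h0 := lemDC hb1 hb2 kb hkb (a * aD) hyp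
    simpa only [mul_assoc] using h0
  have eBT : ∀ t : R, a * (aD * (bD * t)) = bD * (a * (aD * t)) := fun t => by
    simpa only [mul_assoc] using tl eB t
  have fA : b * (bD * aD) = aD * (b * bD) := by
    have hyp : b * bD * a = a * (b * bD) := by simpa only [mul_assoc] using C2.symm
    have h0 := lemDC ha1 ha2 ka hka (b * bD) hyp
    simpa only [mul_assoc] using h0
  have fAT : ∀ t : R, b * (bD * (aD * t)) = aD * (b * (bD * t)) := fun t => by
    simpa only [mul_assoc] using tl fA t
  have R1 : a * (a * (a * bD)) = bD * a := by
    calc a * (a * (a * bD))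
      _ = a * (a * (bD * (bD * (bD * a)))) := by conv_lhs => rhs; rhs; rw [L2]
      _ = a * (a * (bD * (b * (bD * (bD * (bD * a)))))) := by conv_lhs => rhs; rhs; rw [← wBbBT]
      _ = a * (a * (bD * (b * (a * bD)))) := by conv_lhs => rhs; rhs; rhs; rhs; rw [← L2]
      _ = bD * (a * (a * (b * (a * bD)))) := by conv_lhs => rw [M2T]
      _ = bD * (b * (a * (a * (a * bD)))) := by conv_lhs => rhs; rw [K1T]
      _ = bD * (a * (b * bD)) := by conv_lhs => rhs; rw [K3T]
      _ = bD * (b * (bD * a)) := by conv_lhs => rhs; rw [C2]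
      _ = bD * a := by conv_lhs => rw [wBbBT]
  have R1T : ∀ t : R, a * (a * (a * (bD * t))) = bD * (a * t) := fun t => by
    simpa only [mul_assoc] using tl R1 t
  have R2 : b * (b * (b * aD)) = aD * b := by
    calc b * (b * (b * aD))
      _ = b * (b * (aD * (aD * (aD * b)))) := by conv_lhs => rhs; rhs; rw [L1]
      _ = b * (b * (aD * (a * (aD * (aD * (aD * b)))))) := by conv_lhs => rhs; rhs; rw [← wAaAT]
      _ = b * (b * (aD * (a * (b * aD)))) := by conv_lhs => rhs; rhs; rhs; rhs; rw [← L1]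
      _ = aD * (b * (b * (a * (b * aD)))) := by conv_lhs => rw [M1T]
      _ = aD * (a * (b * (b * (b * aD)))) := by conv_lhs => rhs; rw [← K2T]
      _ = aD * (b * (a * aD)) := by conv_lhs => rhs; rw [K4T]
      _ = aD * (a * (aD * b)) := by conv_lhs => rhs; rw [C1]
      _ = aD * b := by conv_lhs => rw [wAaAT]
  have R2T : ∀ t : R, b * (b * (b * (aD * t))) = aD * (b * t) := fun t => by
    simpa only [mul_assoc] using tl R2 t
  have G4 : bD * aD = aD * (aD * (aD * bD)) := lemL ha1 ha2 ka hka bD R1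
  have G4T : ∀ t : R, bD * (aD * t) = aD * (aD * (aD * (bD * t))) := fun t => by
    simpa only [mul_assoc] using tl G4 t
  have G1 : aD * bD = bD * (bD * (bD * aD)) := lemL hb1 hb2 kb hkb aD R2
  have G1T : ∀ t : R, aD * (bD * t) = bD * (bD * (bD * (aD * t))) := fun t => by
    simpa only [mul_assoc] using tl G1 t
  have O1 : a * (a * (a * (a * (a * (aD * (b * bD)))))) = a * (aD * (b * bD)) := by
    calc a * (a * (a * (a * (a * (aD * (b * bD))))))
      _ = a * (a * (a * (a * (a * (b * (b * (b * (aD * bD)))))))) := by conv_lhs => rhs; rhs; rhs; rhs; rhs; rw [← R2T]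
      _ = a * (b * (b * (b * (aD * bD)))) := by conv_lhs => rw [U1T]
      _ = a * (aD * (b * bD)) := by conv_lhs => rhs; rw [R2T]
  have O1T : ∀ t : R, a * (a * (a * (a * (a * (aD * (b * (bD * t))))))) = a * (aD * (b * (bD * t))) := fun t => by
    simpa only [mul_assoc] using tl O1 t
  have O2 : b * (b * (b * (b * (b * (bD * (a * aD)))))) = b * (bD * (a * aD)) := by
    calc b * (b * (b * (b * (b * (bD * (a * aD))))))
      _ = b * (b * (b * (b * (b * (a * (a * (a * (bD * aD)))))))) := by conv_lhs => rhs; rhs; rhs; rhs; rhs; rw [← R1T]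
      _ = b * (a * (a * (a * (bD * aD)))) := by conv_lhs => rw [U2T]
      _ = b * (bD * (a * aD)) := by conv_lhs => rhs; rw [R1T]
  have O2T : ∀ t : R, b * (b * (b * (b * (b * (bD * (a * (aD * t))))))) = b * (bD * (a * (aD * t))) := fun t => by
    simpa only [mul_assoc] using tl O2 t
  have g2 : aD * bD = bD * (aD * (a * a)) := by
    calc aD * bD
      _ = aD * (a * (aD * bD)) := by conv_lhs => rw [← wAaAT]
      _ = aD * (aD * (a * bD)) := by conv_lhs => rhs; rw [waAT]
      _ = aD * (aD * (a * (aD * (a * bD)))) := by conv_lhs => rhs; rw [← wAaAT]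
      _ = aD * (aD * (aD * (a * (a * bD)))) := by conv_lhs => rhs; rhs; rw [waAT]
      _ = aD * (aD * (aD * (bD * (a * a)))) := by conv_lhs => rhs; rhs; rhs; rw [M2]
      _ = bD * (aD * (a * a)) := by conv_lhs => rw [← G4T]
  have g2T : ∀ t : R, aD * (bD * t) = bD * (aD * (a * (a * t))) := fun t => by
    simpa only [mul_assoc] using tl g2 t
  have g5 : bD * aD = aD * (bD * (b * b)) := by
    calc bD * aD
      _ = bD * (b * (bD * aD)) := by conv_lhs => rw [← wBbBT]
      _ = bD * (bD * (b * aD)) := by conv_lhs => rhs; rw [wbBT]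
      _ = bD * (bD * (b * (bD * (b * aD)))) := by conv_lhs => rhs; rw [← wBbBT]
      _ = bD * (bD * (bD * (b * (b * aD)))) := by conv_lhs => rhs; rhs; rw [wbBT]
      _ = bD * (bD * (bD * (aD * (b * b)))) := by conv_lhs => rhs; rhs; rhs; rw [M1]
      _ = aD * (bD * (b * b)) := by conv_lhs => rw [← G1T]
  have g5T : ∀ t : R, bD * (aD * t) = aD * (bD * (b * (b * t))) := fun t => by
    simpa only [mul_assoc] using tl g5 t
  have g3 : aD * bD = b * (b * (bD * aD)) := by
    calc aD * bD
      _ = aD * (bD * (b * bD)) := by conv_lhs => rhs; rw [← wBbB]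
      _ = aD * (b * (bD * bD)) := by conv_lhs => rhs; rw [← wbBT]
      _ = b * (bD * (aD * bD)) := by conv_lhs => rw [← fAT]
      _ = b * (aD * (bD * (b * (b * bD)))) := by conv_lhs => rhs; rw [g5T]
      _ = b * (aD * (b * (bD * (b * bD)))) := by conv_lhs => rhs; rhs; rw [← wbBT]
      _ = b * (aD * (b * bD)) := by conv_lhs => rhs; rhs; rhs; rw [wBbB]
      _ = b * (b * (bD * aD)) := by conv_lhs => rhs; rw [← fA]
  have g3T : ∀ t : R, aD * (bD * t) = b * (b * (bD * (aD * t))) := fun t => by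
    simpa only [mul_assoc] using tl g3 t
  have g6 : bD * aD = a * (a * (aD * bD)) := by
    calc bD * aD
      _ = bD * (aD * (a * aD)) := by conv_lhs => rhs; rw [← wAaA]
      _ = bD * (a * (aD * aD)) := by conv_lhs => rhs; rw [← waAT]
      _ = a * (aD * (bD * aD)) := by conv_lhs => rw [← eBT]
      _ = a * (bD * (aD * (a * (a * aD)))) := by conv_lhs => rhs; rw [g2T]
      _ = a * (bD * (a * (aD * (a * aD)))) := by conv_lhs => rhs; rhs; rw [← waAT]
      _ = a * (bD * (a * aD)) := by conv_lhs => rhs; rhs; rhs; rw [wAaA]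
      _ = a * (a * (aD * bD)) := by conv_lhs => rhs; rw [← eB]
  have g6T : ∀ t : R, bD * (aD * t) = a * (a * (aD * (bD * t))) := fun t => by
    simpa only [mul_assoc] using tl g6 t
  refine ⟨⟨?_, ?_, ?_⟩, ?_, ?_, ?_⟩
  · simpa only [pow_succ, pow_zero, one_mul, mul_assoc] using G1
  · simpa only [pow_succ, pow_zero, one_mul, mul_assoc] using g2
  · simpa only [pow_succ, pow_zero, one_mul, mul_assoc] using g3
  · simpa only [pow_succ, pow_zero, one_mul, mul_assoc] using G4
  · simpa only [pow_succ, pow_zero, one_mul, mul_assoc] using g5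
  · simpa only [pow_succ, pow_zero, one_mul, mul_assoc] using g6
end

section
/- If a, b are Drazin invertible in a ring with a³b = ba and b³a = ab, then ab·(1 − a·a^D) = 0 and ba·(1 − b·b^D) = 0; moreover a·a^D·a^(4+i)·b^j·b·b^D = a·a^D·aⁱ·b^j·b·b^D and a·a^D·a^(2+i)·b^(2+j)·b·b^D = a·a^D·aⁱ·b^j·b·b^D for all natural numbers i, j. -/
section Aux

variable {R : Type*} [Ring R]

/-- From `x^3 * y = y * x`: move `y` right past powers of `x`. -/
lemma drz_move1 {x y : R} (h : x ^ 3 * y = y * x) (k : ℕ) :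
    y * x ^ k = x ^ (3 * k) * y := by
  induction k with
  | zero => simp
  | succ n ih =>
    have e : 3 * n + 3 = 3 * (n + 1) := by ring
    calc y * x ^ (n + 1) = (y * x ^ n) * x := by rw [pow_succ, mul_assoc]
    _ = x ^ (3 * n) * (y * x) := by rw [ih, mul_assoc]
    _ = x ^ (3 * n) * (x ^ 3 * y) := by rw [h]
    _ = x ^ (3 * (n + 1)) * y := by rw [← mul_assoc, ← pow_add, e]

lemma drz_move2 {x y : R} (h : x ^ 3 * y = y * x) (j k : ℕ) :
    y ^ j * x ^ k = x ^ (3 ^ j * k) * y ^ j := by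
  induction j generalizing k with
  | zero => simp
  | succ n ih =>
    have e : 3 ^ n * (3 * k) = 3 ^ (n + 1) * k := by ring
    calc y ^ (n + 1) * x ^ k = y ^ n * (y * x ^ k) := by
          rw [pow_succ, mul_assoc]
    _ = y ^ n * (x ^ (3 * k) * y) := by rw [drz_move1 h]
    _ = (y ^ n * x ^ (3 * k)) * y := by rw [mul_assoc]
    _ = (x ^ (3 ^ n * (3 * k)) * y ^ n) * y := by rw [ih (3*k)]
    _ = x ^ (3 ^ (n + 1) * k) * y ^ (n + 1) := by rw [e, mul_assoc, ← pow_succ]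

/-- Pad a two-power identity on both sides. -/
lemma drz_pad {c d : R} {i j s t : ℕ} (h : c ^ i * d ^ j = c ^ s * d ^ t) (X Y : ℕ) :
    c ^ (X + i) * d ^ (j + Y) = c ^ (X + s) * d ^ (t + Y) := by
  calc c ^ (X + i) * d ^ (j + Y) = (c ^ X * c ^ i) * (d ^ j * d ^ Y) := by
        rw [pow_add, pow_add]
  _ = c ^ X * ((c ^ i * d ^ j) * d ^ Y) := by rw [mul_assoc, ← mul_assoc (c ^ i)]
  _ = c ^ X * ((c ^ s * d ^ t) * d ^ Y) := by rw [h]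
  _ = c ^ (X + s) * d ^ (t + Y) := by
        rw [mul_assoc (c ^ s), ← mul_assoc (c ^ X), ← pow_add, ← pow_add]

section Core

variable {a b : R} (h1 : a ^ 3 * b = b * a) (h2 : b ^ 3 * a = a * b)

include h1 h2

lemma drz_baseF : b ^ (1:ℕ) * a ^ (1:ℕ) = b ^ 27 * a ^ 3 := by
  calc b ^ (1:ℕ) * a ^ (1:ℕ) = b * a := by rw [pow_one, pow_one]
  _ = a ^ 3 * b ^ (1:ℕ) := by rw [pow_one, h1]
  _ = b ^ (3 ^ 3 * 1) * a ^ 3 := drz_move2 h2 3 1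
  _ = b ^ 27 * a ^ 3 := by norm_num

lemma drz_baseR : b ^ (1:ℕ) * a ^ (2:ℕ) = b ^ 729 * a ^ 6 := by
  calc b ^ (1:ℕ) * a ^ (2:ℕ) = b * a ^ 2 := by rw [pow_one]
  _ = a ^ (3 * 2) * b ^ (1:ℕ) := by rw [drz_move1 h1 2, pow_one]
  _ = a ^ 6 * b ^ (1:ℕ) := by norm_num
  _ = b ^ (3 ^ 6 * 1) * a ^ 6 := drz_move2 h2 6 1
  _ = b ^ 729 * a ^ 6 := by norm_num

lemma drz_baseAB : a ^ (1:ℕ) * b ^ (1:ℕ) = a ^ 27 * b ^ 3 := by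
  calc a ^ (1:ℕ) * b ^ (1:ℕ) = b ^ 3 * a ^ (1:ℕ) := by
        simp only [pow_one]; exact h2.symm
  _ = a ^ (3 ^ 3 * 1) * b ^ 3 := drz_move2 h1 3 1
  _ = a ^ 27 * b ^ 3 := by norm_num

lemma drz_edgeF (X Y : ℕ) : b ^ (X + 1) * a ^ (Y + 1) = b ^ (X + 27) * a ^ (Y + 3) := by
  have := drz_pad (drz_baseF h1 h2) X Y
  rwa [add_comm 1 Y, add_comm 3 Y] at this

lemma drz_edgeR (X Y : ℕ) : b ^ (X + 1) * a ^ (Y + 2) = b ^ (X + 729) * a ^ (Y + 6) := by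
  have := drz_pad (drz_baseR h1 h2) X Y
  rwa [add_comm 2 Y, add_comm 6 Y] at this

lemma drz_C (X Y : ℕ) : b ^ (X + 677) * a ^ (Y + 2) = b ^ (X + 1) * a ^ (Y + 2) := by
  calc b ^ (X + 677) * a ^ (Y + 2)
      = b ^ ((X + 676) + 1) * a ^ ((Y + 1) + 1) := by
        rw [show X + 677 = (X + 676) + 1 by omega, show Y + 2 = (Y + 1) + 1 by omega]
  _ = b ^ ((X + 676) + 27) * a ^ ((Y + 1) + 3) := drz_edgeF h1 h2 _ _
  _ = b ^ ((X + 702) + 1) * a ^ ((Y + 3) + 1) := by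
        rw [show (X + 676) + 27 = (X + 702) + 1 by omega, show (Y + 1) + 3 = (Y + 3) + 1 by omega]
  _ = b ^ ((X + 702) + 27) * a ^ ((Y + 3) + 3) := drz_edgeF h1 h2 _ _
  _ = b ^ (X + 729) * a ^ (Y + 6) := by
        rw [show (X + 702) + 27 = X + 729 by omega, show (Y + 3) + 3 = Y + 6 by omega]
  _ = b ^ (X + 1) * a ^ (Y + 2) := (drz_edgeR h1 h2 X Y).symm

lemma drz_CN (n X Y : ℕ) : b ^ (X + 1 + 676 * n) * a ^ (Y + 2) = b ^ (X + 1) * a ^ (Y + 2) := by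
  induction n with
  | zero => simp
  | succ m ih =>
    calc b ^ (X + 1 + 676 * (m + 1)) * a ^ (Y + 2)
        = b ^ ((X + 676 * m) + 677) * a ^ (Y + 2) := by
          rw [show X + 1 + 676 * (m + 1) = (X + 676 * m) + 677 by ring]
    _ = b ^ ((X + 676 * m) + 1) * a ^ (Y + 2) := drz_C h1 h2 _ _
    _ = b ^ (X + 1 + 676 * m) * a ^ (Y + 2) := by
          rw [show (X + 676 * m) + 1 = X + 1 + 676 * m by omega]
    _ = b ^ (X + 1) * a ^ (Y + 2) := ih

/-- The key collapsed identity: `a^5 b^65 = a b^65`. -/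
lemma drz_core1 : a ^ (5:ℕ) * b ^ (65:ℕ) = a ^ (1:ℕ) * b ^ (65:ℕ) := by
  calc a ^ (5:ℕ) * b ^ (65:ℕ) = b ^ (3 ^ 5 * 65) * a ^ 5 := drz_move2 h2 5 65
  _ = b ^ (246 + 1 + 676 * 23) * a ^ (3 + 2) := by norm_num
  _ = b ^ (246 + 1) * a ^ (3 + 2) := drz_CN h1 h2 23 246 3
  _ = b ^ (220 + 27) * a ^ (2 + 3) := by norm_num
  _ = b ^ (220 + 1) * a ^ (2 + 1) := (drz_edgeF h1 h2 220 2).symm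
  _ = b ^ (194 + 27) * a ^ (0 + 3) := by norm_num
  _ = b ^ (194 + 1) * a ^ (0 + 1) := (drz_edgeF h1 h2 194 0).symm
  _ = b ^ (3 ^ 1 * 65) * a ^ 1 := by norm_num
  _ = a ^ (1:ℕ) * b ^ (65:ℕ) := (drz_move2 h2 1 65).symm

lemma drz_core1n (n s t : ℕ) :
    a ^ (s + 1 + 4 * n) * b ^ (t + 65) = a ^ (s + 1) * b ^ (t + 65) := by
  induction n with
  | zero => simp
  | succ m ih =>
    have pad := drz_pad (drz_core1 h1 h2) (s + 4 * m) t
    calc a ^ (s + 1 + 4 * (m + 1)) * b ^ (t + 65)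
        = a ^ ((s + 4 * m) + 5) * b ^ (65 + t) := by
          rw [show s + 1 + 4 * (m + 1) = (s + 4 * m) + 5 by ring, add_comm t 65]
    _ = a ^ ((s + 4 * m) + 1) * b ^ (65 + t) := pad
    _ = a ^ (s + 1 + 4 * m) * b ^ (t + 65) := by
          rw [show (s + 4 * m) + 1 = s + 1 + 4 * m by omega, add_comm 65 t]
    _ = a ^ (s + 1) * b ^ (t + 65) := ih

lemma drz_core2 (s t : ℕ) :
    a ^ (s + 3) * b ^ (t + 67) = a ^ (s + 1) * b ^ (t + 65) := by
  have pad := drz_pad (drz_baseAB h1 h2) s (t + 64)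
  -- pad : a^(s+1) * b^(1+(t+64)) = a^(s+27) * b^(3+(t+64))
  have step1 : a ^ (s + 1) * b ^ (t + 65) = a ^ (s + 27) * b ^ (t + 67) := by
    rw [show t + 65 = 1 + (t + 64) by omega, show t + 67 = 3 + (t + 64) by omega]
    exact pad
  have step2 : a ^ ((s + 2) + 1 + 4 * 6) * b ^ ((t + 2) + 65) =
      a ^ ((s + 2) + 1) * b ^ ((t + 2) + 65) := drz_core1n h1 h2 6 (s + 2) (t + 2)
  rw [show (s + 2) + 1 + 4 * 6 = s + 27 by ring, show (t + 2) + 65 = t + 67 by omega,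
    show (s + 2) + 1 = s + 3 by omega] at step2
  rw [step1, step2]

end Core

/-- Part 1: `a b (1 - a a^D) = 0`. -/
lemma drz_part1 (a b aD : R) (h1 : a ^ 3 * b = b * a) (h2 : b ^ 3 * a = a * b)
    (haD : IsDrazinInverse a aD) : a * b * (1 - a * aD) = 0 := by
  obtain ⟨hxax, hcomm, K, hK⟩ := haD
  -- a*b = a^(26t+1) * b^(2t+1)
  have abt : ∀ t : ℕ, a * b = a ^ (26 * t + 1) * b ^ (2 * t + 1) := by
    intro t
    induction t with
    | zero => simp
    | succ m ih =>
      have pad := drz_pad (drz_baseAB h1 h2) (26 * m) (2 * m)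
      calc a * b = a ^ (26 * m + 1) * b ^ (2 * m + 1) := ih
      _ = a ^ (26 * m + 1) * b ^ (1 + 2 * m) := by rw [add_comm (2 * m) 1]
      _ = a ^ (26 * m + 27) * b ^ (3 + 2 * m) := pad
      _ = a ^ (26 * (m + 1) + 1) * b ^ (2 * (m + 1) + 1) := by
            rw [show 26 * m + 27 = 26 * (m + 1) + 1 by ring, show 3 + 2 * m = 2 * (m + 1) + 1 by ring]
  have hcaD : Commute a aD := hcomm
  have cP : Commute (a * aD) aD := hcaD.mul_left (Commute.refl aD)
  -- aD^(s+1) * a^s = aD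
  have aDs : ∀ s : ℕ, aD ^ (s + 1) * a ^ s = aD := by
    intro s
    induction s with
    | zero => simp
    | succ m ih =>
      calc aD ^ (m + 2) * a ^ (m + 1)
          = (aD ^ (m + 1) * aD) * (a ^ m * a) := by
            rw [show aD ^ (m + 2) = aD ^ (m + 1) * aD from pow_succ aD (m + 1),
              show a ^ (m + 1) = a ^ m * a from pow_succ a m]
      _ = aD ^ (m + 1) * ((aD * a ^ m) * a) := by rw [mul_assoc, ← mul_assoc aD (a ^ m) a]
      _ = aD ^ (m + 1) * ((a ^ m * aD) * a) := by rw [(hcaD.symm.pow_right m).eq]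
      _ = (aD ^ (m + 1) * a ^ m) * (aD * a) := by
            rw [← mul_assoc, ← mul_assoc, mul_assoc (aD ^ (m + 1) * a ^ m)]
      _ = aD * (aD * a) := by rw [ih]
      _ = aD * (a * aD) := by rw [← hcomm]
      _ = (aD * a) * aD := by rw [← mul_assoc]
      _ = aD := hxax
  -- a^(K+d) * (1 - a*aD) = 0
  have paux : ∀ d : ℕ, a ^ (K + d + 1) * aD = a ^ (K + d) := by
    intro d
    induction d with
    | zero => simpa using hK
    | succ m ih =>
      calc a ^ (K + (m + 1) + 1) * aD = a * (a ^ (K + m + 1) * aD) := by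
            rw [show K + (m + 1) + 1 = (K + m + 1) + 1 by omega, pow_succ', mul_assoc]
      _ = a * a ^ (K + m) := by rw [ih]
      _ = a ^ (K + (m + 1)) := by rw [← pow_succ', show K + m + 1 = K + (m + 1) by omega]
  have qz : ∀ d : ℕ, a ^ (K + d) * (1 - a * aD) = 0 := by
    intro d
    rw [mul_sub, mul_one, ← mul_assoc, ← pow_succ, paux d, sub_self]
  -- aD * (b^j * (1 - a*aD)) = 0
  have aDbq : ∀ j : ℕ, aD * (b ^ j * (1 - a * aD)) = 0 := by
    intro j
    have hM : aD ^ (3 ^ j * (K + 1) + 1) * a ^ (3 ^ j * (K + 1)) = aD := aDs _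
    have hmv : b ^ j * a ^ (K + 1) = a ^ (3 ^ j * (K + 1)) * b ^ j := drz_move2 h1 j (K + 1)
    have hq1 : a ^ (K + 1) * (1 - a * aD) = 0 := qz 1
    calc aD * (b ^ j * (1 - a * aD))
        = (aD ^ (3 ^ j * (K + 1) + 1) * a ^ (3 ^ j * (K + 1))) * (b ^ j * (1 - a * aD)) := by
          rw [hM]
    _ = aD ^ (3 ^ j * (K + 1) + 1) * ((a ^ (3 ^ j * (K + 1)) * b ^ j) * (1 - a * aD)) := by
          rw [mul_assoc, ← mul_assoc (a ^ (3 ^ j * (K + 1)))]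
    _ = aD ^ (3 ^ j * (K + 1) + 1) * ((b ^ j * a ^ (K + 1)) * (1 - a * aD)) := by rw [← hmv]
    _ = aD ^ (3 ^ j * (K + 1) + 1) * (b ^ j * (a ^ (K + 1) * (1 - a * aD))) := by
          rw [mul_assoc (b ^ j)]
    _ = 0 := by rw [hq1, mul_zero, mul_zero]
  -- assemble
  have t1 : a ^ (26 * K + 1) * (1 - a * aD) = 0 := by
    have := qz (25 * K + 1)
    rwa [show K + (25 * K + 1) = 26 * K + 1 by ring] at this
  have t2 : aD * (b ^ (2 * K + 1) * (1 - a * aD)) = 0 := aDbq _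
  calc a * b * (1 - a * aD)
      = a ^ (26 * K + 1) * b ^ (2 * K + 1) * (1 - a * aD) := by rw [← abt K]
  _ = a ^ (26 * K + 1) * (b ^ (2 * K + 1) * (1 - a * aD)) := by rw [mul_assoc]
  _ = a ^ (26 * K + 1) * (((1 - a * aD) + a * aD) * (b ^ (2 * K + 1) * (1 - a * aD))) := by
        rw [sub_add_cancel, one_mul]
  _ = (a ^ (26 * K + 1) * (1 - a * aD)) * (b ^ (2 * K + 1) * (1 - a * aD))
      + a ^ (26 * K + 1) * (a * (aD * (b ^ (2 * K + 1) * (1 - a * aD)))) := by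
        rw [add_mul, mul_add, ← mul_assoc, mul_assoc a aD]
  _ = 0 := by rw [t1, t2, zero_mul, mul_zero, mul_zero, add_zero]

end Aux

theorem stmt18 {R : Type*} [Ring R] (a aD b bD : R)
    (haD : IsDrazinInverse a aD) (hbD : IsDrazinInverse b bD)
    (h1 : a ^ 3 * b = b * a) (h2 : b ^ 3 * a = a * b) :
    a * b * (1 - a * aD) = 0 ∧ b * a * (1 - b * bD) = 0 ∧
    (∀ i j : ℕ,
      a * aD * a ^ (4 + i) * b ^ j * (b * bD) = a * aD * a ^ i * b ^ j * (b * bD) ∧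
      a * aD * a ^ (2 + i) * b ^ (2 + j) * (b * bD) = a * aD * a ^ i * b ^ j * (b * bD)) := by
  refine ⟨drz_part1 a b aD h1 h2 haD, drz_part1 b a bD h2 h1 hbD, ?_⟩
  obtain ⟨hbx, hbc, _⟩ := hbD
  obtain ⟨hax, hac, _⟩ := haD
  -- b^(n+1) * bD^(n+1) = b * bD
  have bpow : ∀ n : ℕ, b ^ (n + 1) * bD ^ (n + 1) = b * bD := by
    intro n
    induction n with
    | zero => simp
    | succ m ih =>
      calc b ^ (m + 2) * bD ^ (m + 2) = (b * b ^ (m + 1)) * (bD ^ (m + 1) * bD) := by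
            rw [show b ^ (m + 2) = b * b ^ (m + 1) from pow_succ' b (m + 1),
              show bD ^ (m + 2) = bD ^ (m + 1) * bD from pow_succ bD (m + 1)]
      _ = b * ((b ^ (m + 1) * bD ^ (m + 1)) * bD) := by
            rw [mul_assoc, ← mul_assoc (b ^ (m + 1))]
      _ = b * ((b * bD) * bD) := by rw [ih]
      _ = b * bD := by rw [hbc, hbx]; exact hbc
  have hb65 : b * bD = b ^ (65:ℕ) * bD ^ (65:ℕ) := by
    have := bpow 64
    norm_num at this
    exact this.symm
  have shape : ∀ n m : ℕ, a * aD * a ^ n * b ^ m * (b * bD)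
      = aD * (a ^ (n + 1) * b ^ (m + 65) * bD ^ 65) := by
    intro n m
    rw [hb65, hac, show a ^ (n + 1) = a * a ^ n from pow_succ' a n, pow_add b m 65]
    simp only [mul_assoc]
  intro i j
  constructor
  · rw [shape (4 + i) j, shape i j]
    have hc := drz_core1n h1 h2 1 i j
    rw [show i + 1 + 4 * 1 = 4 + i + 1 by omega] at hc
    rw [hc]
  · rw [shape (2 + i) (2 + j), shape i j]
    have hc := drz_core2 h1 h2 i j
    rw [show 2 + i + 1 = i + 3 by omega, show 2 + j + 65 = j + 67 by omega, hc]
end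

section
/- Let a, b be Drazin invertible in a ring in which 2 is a unit, with a³b = ba and b³a = ab. Then a + b is Drazin invertible and (a+b)^D = (1/8)·b·b^D·(3a³ + 3b³ − a − b)·a·a^D + a^D·(1 − b·b^D) + (1 − a·a^D)·b^D. -/
theorem SemiconjBy.pow_left_of_pow {M : Type*} [Monoid M] {a b : M} {m : ℕ}
    (h : SemiconjBy a b (b ^ m)) (n : ℕ) : SemiconjBy (a ^ n) b (b ^ m ^ n) := by
  induction n with
  | zero => simp
  | succ n ih =>
    rw [pow_succ', pow_succ', pow_mul]
    exact (h.pow_right _).mul_left ih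

theorem pow_four_eq_one_and_sq_eq_sq {M : Type*} [Monoid M] {a b : M} (ha : IsUnit a)
    (hb : IsUnit b) (hba : b * a = a ^ 3 * b) (hab : a * b = b ^ 3 * a) :
    a ^ 4 = 1 ∧ b ^ 2 = a ^ 2 := by
  obtain ⟨a, rfl⟩ := ha
  obtain ⟨b, rfl⟩ := hb
  simp only [← Units.val_pow_eq_pow_val, ← Units.val_mul, Units.val_inj, Units.val_eq_one] at *
  have hb := SemiconjBy.pow_left_of_pow hba
  have h50 : b ^ 2 = (a ^ 50)⁻¹ := by
    refine eq_inv_of_mul_eq_one_right (mul_left_cancel (a := a ^ 4) (mul_right_cancel (b := b) ?_))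
    calc a ^ 4 * (a ^ 50 * b ^ 2) * b = (a ^ 3 ^ 3) ^ 2 * b ^ 3 := by group
      _ = b ^ 3 * a * a := by rw [← ((hb 3).pow_right 2).eq, mul_assoc, ← sq]
      _ = a * (b * a) := by rw [← hab, mul_assoc]
      _ = a ^ 4 * 1 * b := by rw [hba]; group
  have hcomm : Commute a (b ^ 2) := h50 ▸ ((Commute.refl a).pow_right 50).inv_right
  have h8 : a ^ 8 = 1 := by
    refine mul_left_cancel (a := a) (mul_right_cancel (b := b ^ 2) ?_)
    rw [← pow_succ', show 8 + 1 = 3 ^ 2 from rfl, ← (hb 2).eq, ← hcomm.eq, mul_one]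
  have h2 : b ^ 2 = (a ^ 2)⁻¹ := by
    rw [h50, show 50 = 8 * 6 + 2 by rfl, pow_add, pow_mul, h8, one_pow, one_mul]
  have h4 : a ^ 4 = 1 := by
    have h := ((SemiconjBy.pow_left_of_pow hab 1).pow_right 2).eq
    rw [← pow_mul, pow_mul', h2] at h
    group at h
    calc a ^ 4 = a ^ (-1 : ℤ) * (a ^ (-5 : ℤ))⁻¹ := by group
      _ = 1 := by rw [h, mul_inv_cancel]
  exact ⟨h4, by rw [h2, inv_eq_of_mul_eq_one_right]; rw [← pow_add, h4]⟩

section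

variable {R : Type*} [Ring R]

namespace IsDrazinInverse

variable {a x : R}

theorem commute (h : IsDrazinInverse a x) : Commute a x := h.2.1

theorem isIdempotentElem (h : IsDrazinInverse a x) : IsIdempotentElem (a * x) := by
  rw [IsIdempotentElem, mul_assoc, ← mul_assoc x, h.1]

theorem mul_mul_self (h : IsDrazinInverse a x) : a * x * x = x := by
  rw [h.commute.eq, h.1]

theorem pow_mul_pow_succ (h : IsDrazinInverse a x) (n : ℕ) : a ^ n * x ^ (n + 1) = x := by
  rw [pow_succ, ← mul_assoc, ← h.commute.mul_pow]
  induction n with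
  | zero => rw [pow_zero, one_mul]
  | succ n ih => rw [pow_succ, mul_assoc, h.mul_mul_self, ih]

theorem exists_pow_mul_one_sub_eq_zero (h : IsDrazinInverse a x) :
    ∃ k, ∀ n, k ≤ n → a ^ n * (1 - a * x) = 0 := by
  obtain ⟨k, hk⟩ := h.2.2
  refine ⟨k, fun n hn => ?_⟩
  induction n, hn using Nat.le_induction with
  | base => rw [mul_sub, mul_one, ← mul_assoc, ← pow_succ, hk, sub_self]
  | succ n _ ih => rw [pow_succ', mul_assoc, ih, mul_zero]

theorem exists_pow_eq_pow_succ_mul (h : IsDrazinInverse a x) :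
    ∃ k, ∀ n, k ≤ n → a ^ n = a ^ (n + 1) * x := by
  obtain ⟨k, hk⟩ := h.exists_pow_mul_one_sub_eq_zero
  refine ⟨k, fun n hn => ?_⟩
  rw [pow_succ, mul_assoc, ← sub_eq_zero, ← mul_one_sub, hk n hn]

theorem pow (h : IsDrazinInverse a x) (n : ℕ) : IsDrazinInverse (a ^ n) (x ^ n) := by
  refine ⟨?_, (h.commute.pow_pow n n).eq, ?_⟩
  · rw [← h.commute.symm.mul_pow, ← ((Commute.refl x).mul_left h.commute).mul_pow, h.1]
  · rcases n.eq_zero_or_pos with rfl | hn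
    · exact ⟨0, by simp⟩
    obtain ⟨k, hk⟩ := h.exists_pow_eq_pow_succ_mul
    refine ⟨k, ?_⟩
    rw [pow_succ, mul_assoc, ← h.commute.mul_pow, h.isIdempotentElem.pow_eq hn.ne', ← mul_assoc,
      ← pow_mul, ← pow_succ, ← hk _ (Nat.le_mul_of_pos_left k hn)]

theorem semiconjBy {c y u : R} (ha : IsDrazinInverse a x) (hc : IsDrazinInverse c y)
    (hu : SemiconjBy u a c) : SemiconjBy u x y := by
  obtain ⟨ka, hka⟩ := ha.exists_pow_eq_pow_succ_mul
  obtain ⟨kc, hkc⟩ := hc.exists_pow_eq_pow_succ_mul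
  set m := max ka kc
  have hpow : ∀ n, u * a ^ n = c ^ n * u := fun n => (hu.pow_right n).eq
  have hyc : y ^ (m + 1) * c ^ m = y := by
    rw [← (hc.commute.pow_pow m (m + 1)).eq, hc.pow_mul_pow_succ]
  have hux : u * x = y * u * (a * x) :=
    calc u * x = u * a ^ m * x ^ (m + 1) := by rw [mul_assoc, ha.pow_mul_pow_succ]
      _ = y * (c ^ (m + 1) * u) * x ^ (m + 1) := by
        rw [hpow, hkc m (le_max_right _ _), (hc.commute.pow_left _).eq, mul_assoc y]
      _ = y * u * (a * x) := by
        rw [← hpow, pow_succ']; simp only [mul_assoc, ha.pow_mul_pow_succ]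
  have hyu : y * u = y * c * (u * x) :=
    calc y * u = y ^ (m + 1) * (u * a ^ m) := by rw [hpow, ← mul_assoc, hyc]
      _ = y ^ (m + 1) * c ^ (m + 1) * (u * x) := by
          rw [hka m (le_max_left _ _), ← mul_assoc u, hpow]; simp only [mul_assoc]
      _ = y * c * (u * x) := by rw [pow_succ c, ← mul_assoc (y ^ (m + 1)), hyc]
  calc u * x = y * (u * a) * x := by rw [hux]; simp only [mul_assoc]
    _ = y * u := by rw [hu.eq, hyu]; simp only [mul_assoc]

theorem commute_of_commute {u : R} (h : IsDrazinInverse a x) (hu : Commute u a) : Commute u x :=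
  h.semiconjBy h hu

theorem commute_mul_of_semiconjBy {b : R} {m : ℕ} (h : IsDrazinInverse a x)
    (hb : SemiconjBy b a (a ^ m)) (hm : m ≠ 0) : Commute b (a * x) := by
  have := hb.mul_right (h.semiconjBy (h.pow m) hb)
  rwa [← h.commute.mul_pow, h.isIdempotentElem.pow_eq hm] at this

theorem mul_mul_one_sub_eq_zero {b y : R} {m : ℕ} (ha : IsDrazinInverse a x)
    (hb : IsDrazinInverse b y) (hab : SemiconjBy a b (b ^ m)) (hm : 1 < m) :
    a * x * b * (1 - b * y) = 0 := by
  obtain ⟨k, hk⟩ := hb.exists_pow_mul_one_sub_eq_zero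
  have hq : Commute a (1 - b * y) :=
    (Commute.one_right a).sub_right (hb.commute_mul_of_semiconjBy hab (by omega))
  have hp : a * x = x ^ (k + 1) * a ^ (k + 1) := by
    rw [← ha.commute.symm.mul_pow, ← ha.commute.eq, ha.isIdempotentElem.pow_succ_eq]
  have hkm : k ≤ m ^ (k + 1) := (Nat.le_succ k).trans (Nat.lt_pow_self hm).le
  rw [hp, mul_assoc (x ^ (k + 1)), (hab.pow_left_of_pow (k + 1)).eq]
  simp only [mul_assoc]
  rw [(hq.pow_left (k + 1)).eq, ← mul_assoc (b ^ _), hk _ hkm, zero_mul, mul_zero]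

end IsDrazinInverse

theorem Commute.three_mul_pow_add_three_mul_pow_sub_sub {g a b : R} (ha : Commute g a)
    (hb : Commute g b) : Commute g (3 * a ^ 3 + 3 * b ^ 3 - a - b) :=
  ((((Commute.ofNat_right g 3).mul_right (ha.pow_right 3)).add_right
    ((Commute.ofNat_right g 3).mul_right (hb.pow_right 3))).sub_right ha).sub_right hb

theorem commute_of_mul_ofNat_eq_one {e : R} {n : ℕ} [n.AtLeastTwo] (h₁ : e * OfNat.ofNat n = 1)
    (h₂ : OfNat.ofNat n * e = 1) (t : R) : Commute e t :=
  (Commute.ofNat_left n t).units_inv_left (u := ⟨OfNat.ofNat n, e, h₂, h₁⟩)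

theorem isDrazinInverse_add_of_pow_four_eq_one {A B e : R} (hA : A ^ 4 = 1) (hB : B ^ 2 = A ^ 2)
    (hBA : B * A = A ^ 3 * B) (he8 : e * 8 = 1) (h8e : 8 * e = 1) :
    IsDrazinInverse (A + B) (e * (3 * A ^ 3 + 3 * B ^ 3 - A - B)) := by
  set S := A + B
  set T := 3 * A ^ 3 + 3 * B ^ 3 - A - B
  -- rewriting rules bringing every word in `A`, `B` to the form `Aⁱ Bʲ` with `i < 4`, `j < 2`
  have rBA : B * A = A * (A * (A * B)) := by
    rw [hBA]; simp only [pow_succ, pow_zero, one_mul, mul_assoc]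
  have rBB : B * B = A * A := by rw [← sq, hB, sq]
  have rA4 : A * (A * (A * A)) = 1 := by
    rw [← hA]; simp only [pow_succ, pow_zero, one_mul, mul_assoc]
  have rBA' : ∀ t, B * (A * t) = A * (A * (A * (B * t))) := fun t => by
    rw [← mul_assoc, rBA]; simp only [mul_assoc]
  have rA4' : ∀ t, A * (A * (A * (A * t))) = t := fun t => by
    simpa only [mul_assoc, one_mul] using congrArg (· * t) rA4
  have r3 : ∀ t u : R, t * (3 * u) = 3 * (t * u) := fun t u => (Commute.ofNat_right t 3).left_comm u
  have hST : S * T = T * S ∧ T * S * T = 8 * T ∧ S ^ 2 * T = 8 * S := by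
    simp only [S, T, add_mul, mul_add, mul_sub, sub_mul, pow_succ, pow_zero, one_mul, mul_assoc,
      r3, rBA, rBB, rA4, rBA', rA4']
    refine ⟨?_, ?_, ?_⟩ <;> noncomm_ring
  obtain ⟨hST, hTST, hSST⟩ := hST
  have he := commute_of_mul_ofNat_eq_one he8 h8e
  refine ⟨?_, ?_, 1, ?_⟩
  · simp only [mul_assoc]
    rw [← (he S).left_comm, ← (he T).left_comm, ← mul_assoc T, hTST, ← mul_assoc e 8, he8, one_mul]
  · rw [← mul_assoc, ← (he S).eq, mul_assoc, hST, mul_assoc]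
  · rw [← mul_assoc, ← (he _).eq, mul_assoc, one_add_one_eq_two, hSST, ← mul_assoc, he8, one_mul,
      pow_one]

theorem add_pow_mul_eq_zero {a b u : R} {l m i j : ℕ} (hab : SemiconjBy a b (b ^ m))
    (hba : SemiconjBy b a (a ^ l)) (ha : a ^ i * u = 0) (hb : b ^ j * u = 0) :
    (a + b) ^ (i + j) * u = 0 := by
  induction h : i + j generalizing i j u with
  | zero =>
    obtain ⟨rfl, -⟩ : i = 0 ∧ j = 0 := by omega
    rwa [pow_zero, one_mul] at ha ⊢
  | succ n ih =>
    rcases i with _ | i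
    · rw [pow_zero, one_mul] at ha
      rw [ha, mul_zero]
    rcases j with _ | j
    · rw [pow_zero, one_mul] at hb
      rw [hb, mul_zero]
    have hau : (a + b) ^ n * (a * u) = 0 := ih (i := i) (j := j + 1)
      (by rw [← mul_assoc, ← pow_succ, ha])
      (by rw [← mul_assoc, (hba.pow_left_of_pow _).eq, mul_assoc, hb, mul_zero]) (by omega)
    have hbu : (a + b) ^ n * (b * u) = 0 := ih (i := i + 1) (j := j)
      (by rw [← mul_assoc, (hab.pow_left_of_pow _).eq, mul_assoc, ha, mul_zero])
      (by rw [← mul_assoc, ← pow_succ, hb]) (by omega)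
    rw [pow_succ, mul_assoc, add_mul, mul_add, hau, hbu, add_zero]

def IsDrazinInverseOn (s x f : R) : Prop :=
  x * s * x * f = x * f ∧ s * x * f = x * s * f ∧ ∃ k : ℕ, s ^ (k + 1) * x * f = s ^ k * f

namespace IsDrazinInverseOn

variable {s x f : R}

theorem isDrazinInverse (h : IsDrazinInverseOn s x 1) : IsDrazinInverse s x := by
  simpa only [IsDrazinInverseOn, IsDrazinInverse, mul_one] using h

theorem add {f' : R} (h : IsDrazinInverseOn s x f) (h' : IsDrazinInverseOn s x f') :
    IsDrazinInverseOn s x (f + f') := by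
  have raise : ∀ {f : R} {k : ℕ}, s ^ (k + 1) * x * f = s ^ k * f →
      ∀ n, k ≤ n → s ^ (n + 1) * x * f = s ^ n * f := fun hk n hn => by
    induction n, hn using Nat.le_induction with
    | base => exact hk
    | succ n _ ih =>
      rw [pow_succ' s (n + 1), mul_assoc s, mul_assoc s, ih, ← mul_assoc, ← pow_succ']
  obtain ⟨h₁, h₂, k, hk⟩ := h
  obtain ⟨h₁', h₂', k', hk'⟩ := h'
  refine ⟨by rw [mul_add, mul_add, h₁, h₁'], by rw [mul_add, mul_add, h₂, h₂'], max k k', ?_⟩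
  rw [mul_add, mul_add, raise hk _ (le_max_left _ _), raise hk' _ (le_max_right _ _)]

theorem of_isDrazinInverse (h : IsDrazinInverse s x) (f : R) : IsDrazinInverseOn s x f := by
  obtain ⟨h₁, h₂, k, hk⟩ := h
  exact ⟨by rw [h₁], by rw [h₂], k, by rw [hk]⟩

theorem congr {s' x' : R} (h : IsDrazinInverseOn s' x' f) (hs : s * f = s' * f)
    (hx : x * f = x' * f) (hfs : Commute f s') (hfx : Commute f x') : IsDrazinInverseOn s x f := by
  have hs' : ∀ t, t * s * f = t * f * s' := fun t => by rw [mul_assoc, hs, ← hfs.eq, mul_assoc]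
  have hx' : ∀ t, t * x * f = t * f * x' := fun t => by rw [mul_assoc, hx, ← hfx.eq, mul_assoc]
  have hfs' : ∀ t, t * f * s' = t * s' * f := fun t => by rw [mul_assoc, hfs.eq, mul_assoc]
  have hfx' : ∀ t, t * f * x' = t * x' * f := fun t => by rw [mul_assoc, hfx.eq, mul_assoc]
  have hpow : ∀ n, s ^ n * f = s' ^ n * f := fun n => by
    induction n with
    | zero => rw [pow_zero, pow_zero]
    | succ n ih => rw [pow_succ, hs', ih, hfs', ← pow_succ]
  obtain ⟨h₁, h₂, k, hk⟩ := h
  refine ⟨?_, ?_, k, ?_⟩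
  · rw [hx', hs', hx, hfs', hfx', h₁]
  · rw [hx' s, hs, hfx', h₂, hs' x, hx, hfs']
  · rw [hx', hpow, hfx', hk, hpow]

theorem of_mul_eq_self (h₁ : s * x * f = f) (h₂ : x * s * f = f) : IsDrazinInverseOn s x f :=
  ⟨by rw [mul_assoc x s, mul_assoc x, h₁], by rw [h₁, h₂], 0,
    by rw [zero_add, pow_one, h₁, pow_zero, one_mul]⟩

theorem of_mul_eq_zero {n : ℕ} (hx : x * f = 0) (hfs : Commute f s) (hn : s ^ n * f = 0) :
    IsDrazinInverseOn s x f :=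
  ⟨by rw [mul_assoc, hx, mul_zero],
    by rw [mul_assoc, hx, mul_zero, mul_assoc, ← hfs.eq, ← mul_assoc, hx, zero_mul],
    n, by rw [mul_assoc, hx, mul_zero, hn]⟩

theorem add_of_mul_eq_zero {a aD b : R} (haD : Commute a aD) (hfa : Commute f a)
    (hfaD : Commute f aD) (hf : a * aD * f = f) (hbf : b * f = 0) (hx : x * f = aD * f) :
    IsDrazinInverseOn (a + b) x f :=
  of_mul_eq_self
    (by rw [mul_assoc, hx, add_mul, ← mul_assoc, hf, ← hfaD.eq, ← mul_assoc, hbf, zero_mul,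
      add_zero])
    (by rw [mul_assoc, add_mul, hbf, add_zero, ← hfa.eq, ← mul_assoc, hx, mul_assoc, hfa.eq,
      ← mul_assoc, ← haD.eq, hf])

end IsDrazinInverseOn

theorem mul_peirce_corners {e c u v P Q : R} (hP : IsIdempotentElem P) (hQ : IsIdempotentElem Q)
    (hPQ : Commute P Q) (hQc : Commute Q c) (hPv : Commute P v) (hu : u * P = u) (hv : v * Q = v) :
    let W := e * (Q * c * P) + u * (1 - Q) + (1 - P) * v
    W * (P * Q) = e * c * (P * Q) ∧ W * (P * (1 - Q)) = u * (P * (1 - Q)) ∧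
      W * (Q * (1 - P)) = v * (Q * (1 - P)) ∧ W * ((1 - P) * (1 - Q)) = 0 := by
  have hu' : ∀ t, u * (P * t) = u * t := fun t => by rw [← mul_assoc, hu]
  have hvPQ : v * (P * Q) = v * P := by rw [hPQ.eq, ← mul_assoc, hv]
  simp only [add_mul, mul_sub, sub_mul, mul_one, one_mul, mul_assoc, hP.eq, hQ.eq, hP.mul_self_mul,
    hPQ.symm.eq, hPQ.symm.left_comm, hQc.eq, hPv.eq, hu, hu', hv, hvPQ]
  refine ⟨?_, ?_, ?_, ?_⟩ <;> noncomm_ring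

theorem Commute.peirce_corners_sum {P Q : R} (h : Commute P Q) :
    P * Q + P * (1 - Q) + Q * (1 - P) + (1 - P) * (1 - Q) = 1 := by
  simp only [mul_sub, sub_mul, mul_one, one_mul, h.eq]
  abel

-- Multiplicative on the centralizer of an idempotent `g`, so it turns elements invertible on the
-- corner `g` into units of `R`, where group theory applies.
def cornerLift (g x : R) : R := x * g + (1 - g)

section cornerLift

variable {g x y : R}

theorem cornerLift_mul (hg : IsIdempotentElem g) (hy : Commute g y) :
    cornerLift g x * cornerLift g y = cornerLift g (x * y) := by
  simp only [cornerLift, mul_add, add_mul, mul_sub, sub_mul, mul_one, one_mul, mul_assoc,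
    hy.left_comm, hg.eq]
  noncomm_ring

theorem cornerLift_one : cornerLift g (1 : R) = 1 := by
  rw [cornerLift, one_mul, add_sub_cancel]

theorem cornerLift_pow (hg : IsIdempotentElem g) (hx : Commute g x) (n : ℕ) :
    cornerLift g x ^ n = cornerLift g (x ^ n) := by
  induction n with
  | zero => rw [pow_zero, pow_zero, cornerLift_one]
  | succ n ih => rw [pow_succ, ih, cornerLift_mul hg hx, pow_succ]

theorem cornerLift_mul_self (hg : IsIdempotentElem g) : cornerLift g x * g = x * g := by
  rw [cornerLift, add_mul, mul_assoc, hg.eq, sub_mul, one_mul, hg.eq, sub_self, add_zero]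

theorem commute_cornerLift (hx : Commute g x) : Commute g (cornerLift g x) :=
  (hx.mul_right (Commute.refl g)).add_right ((Commute.one_right g).sub_right (Commute.refl g))

theorem isUnit_cornerLift (hg : IsIdempotentElem g) (hx : Commute g x) (hy : Commute g y)
    (hxy : x * y * g = g) (hyx : y * x * g = g) : IsUnit (cornerLift g x) :=
  ⟨⟨cornerLift g x, cornerLift g y, by rw [cornerLift_mul hg hy, cornerLift, hxy, add_sub_cancel],
    by rw [cornerLift_mul hg hx, cornerLift, hyx, add_sub_cancel]⟩, rfl⟩

end cornerLift

section Corners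

variable {a aD b bD x : R}

theorem isDrazinInverseOn_add_mul_one_sub {l m : ℕ} (haD : IsDrazinInverse a aD)
    (hbD : IsDrazinInverse b bD) (hab : SemiconjBy a b (b ^ m)) (hba : SemiconjBy b a (a ^ l))
    (hm : 1 < m) (hl : l ≠ 0) (hx : x * (a * aD * (1 - b * bD)) = aD * (a * aD * (1 - b * bD))) :
    IsDrazinInverseOn (a + b) x (a * aD * (1 - b * bD)) := by
  have hqa : Commute (b * bD) a := (hbD.commute_mul_of_semiconjBy hab (by omega)).symm
  refine .add_of_mul_eq_zero haD.commute ?_ ?_ ?_ ?_ hx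
  · exact ((Commute.refl a).mul_left haD.commute.symm).mul_left ((Commute.one_left a).sub_left hqa)
  · exact (haD.commute.mul_left (Commute.refl aD)).mul_left
      ((Commute.one_left aD).sub_left (haD.commute_of_commute hqa))
  · rw [← mul_assoc, haD.isIdempotentElem.eq]
  · rw [← mul_assoc, (haD.commute_mul_of_semiconjBy hba hl).eq,
      haD.mul_mul_one_sub_eq_zero hbD hab hm]

theorem isDrazinInverseOn_add_one_sub_mul_one_sub {l m : ℕ} (haD : IsDrazinInverse a aD)
    (hbD : IsDrazinInverse b bD) (hab : SemiconjBy a b (b ^ m)) (hba : SemiconjBy b a (a ^ l))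
    (hm : m ≠ 0) (hl : l ≠ 0) (hx : x * ((1 - a * aD) * (1 - b * bD)) = 0) :
    IsDrazinInverseOn (a + b) x ((1 - a * aD) * (1 - b * bD)) := by
  obtain ⟨i, hi⟩ := haD.exists_pow_mul_one_sub_eq_zero
  obtain ⟨j, hj⟩ := hbD.exists_pow_mul_one_sub_eq_zero
  have hpa : Commute (1 - a * aD) a :=
    (Commute.one_left a).sub_left ((Commute.refl a).mul_left haD.commute.symm)
  have hpb : Commute (1 - a * aD) b :=
    (Commute.one_left b).sub_left (haD.commute_mul_of_semiconjBy hba hl).symm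
  have hqa : Commute (1 - b * bD) a :=
    (Commute.one_left a).sub_left (hbD.commute_mul_of_semiconjBy hab hm).symm
  have hqb : Commute (1 - b * bD) b :=
    (Commute.one_left b).sub_left ((Commute.refl b).mul_left hbD.commute.symm)
  refine .of_mul_eq_zero hx ((hpa.mul_left hqa).add_right (hpb.mul_left hqb))
    (add_pow_mul_eq_zero hab hba (i := i) (j := j) ?_ ?_)
  · rw [← mul_assoc, hi i le_rfl, zero_mul]
  · rw [← mul_assoc, ← (hpb.pow_right j).eq, mul_assoc, hj j le_rfl, mul_zero]

theorem isDrazinInverseOn_add_mul_mul {e : R} (haD : IsDrazinInverse a aD)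
    (hbD : IsDrazinInverse b bD) (hab : SemiconjBy a b (b ^ 3)) (hba : SemiconjBy b a (a ^ 3))
    (he8 : e * 8 = 1) (h8e : 8 * e = 1)
    (hx : x * (a * aD * (b * bD)) = e * (3 * a ^ 3 + 3 * b ^ 3 - a - b) * (a * aD * (b * bD))) :
    IsDrazinInverseOn (a + b) x (a * aD * (b * bD)) := by
  set g := a * aD * (b * bD)
  have hpb : Commute (a * aD) b := (haD.commute_mul_of_semiconjBy hba three_ne_zero).symm
  have hqa : Commute (b * bD) a := (hbD.commute_mul_of_semiconjBy hab three_ne_zero).symm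
  have hpq : Commute (a * aD) (b * bD) := hpb.mul_right (hbD.commute_of_commute hpb)
  have hg : IsIdempotentElem g := haD.isIdempotentElem.mul_of_commute hpq hbD.isIdempotentElem
  have hga : Commute g a := ((Commute.refl a).mul_left haD.commute.symm).mul_left hqa
  have hgb : Commute g b := hpb.mul_left ((Commute.refl b).mul_left hbD.commute.symm)
  have hag : a * aD * g = g := by rw [← mul_assoc, haD.isIdempotentElem.eq]
  have hbg : b * bD * g = g := by rw [← mul_assoc, ← hpq.eq, mul_assoc, hbD.isIdempotentElem.eq]
  set A := cornerLift g a
  set B := cornerLift g b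
  have hBA : B * A = A ^ 3 * B := by
    rw [cornerLift_mul hg hga, cornerLift_pow hg hga, cornerLift_mul hg hgb, hba.eq]
  have hAB : A * B = B ^ 3 * A := by
    rw [cornerLift_mul hg hgb, cornerLift_pow hg hgb, cornerLift_mul hg hga, hab.eq]
  obtain ⟨hA4, hB2⟩ := pow_four_eq_one_and_sq_eq_sq
    (isUnit_cornerLift hg hga (haD.commute_of_commute hga) hag (by rw [← haD.commute.eq, hag]))
    (isUnit_cornerLift hg hgb (hbD.commute_of_commute hgb) hbg (by rw [← hbD.commute.eq, hbg]))
    hBA hAB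
  have hgA : Commute g A := commute_cornerLift hga
  have hgB : Commute g B := commute_cornerLift hgb
  refine (IsDrazinInverseOn.of_isDrazinInverse
    (isDrazinInverse_add_of_pow_four_eq_one hA4 hB2 hBA he8 h8e) g).congr ?_ ?_ ?_ ?_
  · rw [add_mul, add_mul, cornerLift_mul_self hg, cornerLift_mul_self hg]
  · rw [hx, mul_assoc, mul_assoc e]
    simp only [sub_mul, add_mul, mul_assoc, cornerLift_pow hg hga, cornerLift_pow hg hgb,
      cornerLift_mul_self hg]
  · exact hgA.add_right hgB
  · exact (commute_of_mul_ofNat_eq_one he8 h8e g).symm.mul_right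
      (hgA.three_mul_pow_add_three_mul_pow_sub_sub hgB)

end Corners

end

theorem stmt19_general {R : Type*} [Ring R] (a aD b bD : R)
    (haD : IsDrazinInverse a aD) (hbD : IsDrazinInverse b bD)
    (h1 : a ^ 3 * b = b * a) (h2 : b ^ 3 * a = a * b) :
    ∀ e : R, e * 8 = 1 → 8 * e = 1 →
      IsDrazinInverse (a + b)
        (e * (b * bD * (3 * a ^ 3 + 3 * b ^ 3 - a - b) * (a * aD)) +
          aD * (1 - b * bD) + (1 - a * aD) * bD) := by
  intro e he8 h8e
  have hab : SemiconjBy a b (b ^ 3) := h2.symm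
  have hba : SemiconjBy b a (a ^ 3) := h1.symm
  have hpb : Commute (a * aD) b := (haD.commute_mul_of_semiconjBy hba three_ne_zero).symm
  have hqa : Commute (b * bD) a := (hbD.commute_mul_of_semiconjBy hab three_ne_zero).symm
  have hqb : Commute (b * bD) b := (Commute.refl b).mul_left hbD.commute.symm
  have hpq : Commute (a * aD) (b * bD) := hpb.mul_right (hbD.commute_of_commute hpb)
  have hqc := hqa.three_mul_pow_add_three_mul_pow_sub_sub hqb
  obtain ⟨hWg, hWp, hWq, hWn⟩ := mul_peirce_corners (e := e) haD.isIdempotentElem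
    hbD.isIdempotentElem hpq hqc (hbD.commute_of_commute hpb) (by rw [← mul_assoc, haD.1])
    (by rw [← mul_assoc, hbD.1])
  have hq := isDrazinInverseOn_add_mul_one_sub hbD haD hba hab (by norm_num) three_ne_zero hWq
  rw [add_comm b a] at hq
  have h := (((isDrazinInverseOn_add_mul_mul haD hbD hab hba he8 h8e hWg).add
    (isDrazinInverseOn_add_mul_one_sub haD hbD hab hba (by norm_num) three_ne_zero hWp)).add hq).add
    (isDrazinInverseOn_add_one_sub_mul_one_sub haD hbD hab hba three_ne_zero three_ne_zero hWn)
  rw [hpq.peirce_corners_sum] at h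
  exact h.isDrazinInverse

theorem stmt19 {R : Type*} [Ring R] (a aD b bD : R)
    (haD : IsDrazinInverse a aD) (hbD : IsDrazinInverse b bD)
    (h1 : a ^ 3 * b = b * a) (h2 : b ^ 3 * a = a * b)
    (h2u : IsUnit (2 : R)) :
    ∀ e : R, e * 8 = 1 → 8 * e = 1 →
      IsDrazinInverse (a + b)
        (e * (b * bD * (3 * a ^ 3 + 3 * b ^ 3 - a - b) * (a * aD)) +
          aD * (1 - b * bD) + (1 - a * aD) * bD) :=
  stmt19_general a aD b bD haD hbD h1 h2
end
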